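/- arXiv:1105.3701 — 5 statements merged into one kernel-verified Lean document; each statement's English description precedes it below -/
import Mathlib

section
/- There exists τ > 0, depending only on Σ and R₀, such that for every f ∈ A one has max_{x∈Σ} T(x,f) > τ, where T(x,f) = ∫_{B_x(σ(x,f))} f dV. The constant τ can be taken as 1/(k+2), where k is the number of balls of radius σ(x₀,f)/3 needed to cover the annulus A_{x₀}(σ(x₀,f), R·σ(x₀,f)) (a number bounded in terms of Σ and R₀ only). -/
open MeasureTheory Metric
open scoped ENNReal

/-!
Suppose `T(x) = ν(B(x, σ x)) ≤ τ` everywhere, where `ν = f μ`; by balancing, also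
`ν(B(x, R₀ σ x)ᶜ) ≤ τ`. By compactness (Lebesgue number) there is a scale `v > 0` such that every
ball of radius `v` lies in some `B(p, σ p)`, hence has mass `≤ τ`, and such that `σ x₁ < (R₀/3) v`
for some `x₁`. Covering annuli by `k` small balls at geometrically growing scales shows that every
ball of radius `≤ R₀ v` has mass `≤ (1 + n k) τ`, with `n` depending only on `R₀`. Finally
`B(x₁, R₀ σ x₁)` is covered by `B(x₁, R₀ v)` and `k` balls of radius `σ x₁`, so
`1 ≤ ((1 + k)(1 + n k) + 1) τ`, which fails for `τ = 1 / (2 ((1 + k)(1 + n k) + 1))`.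
-/

def AnnuliCoveredBy (S : Type*) [PseudoMetricSpace S] (R : ℝ) (k : ℕ) : Prop :=
  ∀ (w : S) (ρ : ℝ), 0 < ρ → ∃ c : Fin k → S,
    {y | ρ < dist y w ∧ dist y w < R * ρ} ⊆ ⋃ i, ball (c i) (ρ / 3)

section Metric

variable {S : Type*} [PseudoMetricSpace S]

theorem ball_subset_ball_union_iUnion_of_annulus_subset {ι : Type*} {w : S} {c : ι → S}
    {R ρ r r' : ℝ} (hc : {y | ρ < dist y w ∧ dist y w < R * ρ} ⊆ ⋃ i, ball (c i) (ρ / 3))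
    (hρr : ρ < r) (hr' : r' ≤ R * ρ) :
    ball w r' ⊆ ball w r ∪ ⋃ i, ball (c i) (ρ / 3) := by
  intro y hy
  by_cases hyr : dist y w < r
  · exact Or.inl hyr
  · exact Or.inr (hc ⟨hρr.trans_le (not_lt.mp hyr), (mem_ball.mp hy).trans_le hr'⟩)

theorem exists_pos_forall_ball_subset_ball_and_exists_lt [CompactSpace S] [Nonempty S]
    {σ : S → ℝ} (hσ : ∀ x, 0 < σ x) {R : ℝ} (hR : 1 < R) :
    ∃ v > 0, (∀ w, ∃ p, ball w v ⊆ ball p (σ p)) ∧ ∃ x, σ x < R * v := by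
  obtain ⟨δ, hδ, hδball⟩ := lebesgue_number_lemma_of_metric isCompact_univ
    (fun p => isOpen_ball) (fun x _ => Set.mem_iUnion.mpr ⟨x, mem_ball_self (hσ x)⟩)
  by_cases hsmall : ∃ x, σ x < R * δ
  · exact ⟨δ, hδ, fun w => hδball w (Set.mem_univ w), hsmall⟩
  simp only [not_exists, not_lt] at hsmall
  have hRδ : 0 < R * δ := by positivity
  have hinf : 0 < ⨅ x, σ x := hRδ.trans_le (le_ciInf hsmall)
  refine ⟨⨅ x, σ x, hinf, fun w => ⟨w, ball_subset_ball (ciInf_le ⟨0, ?_⟩ w)⟩, ?_⟩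
  · rintro _ ⟨x, rfl⟩
    exact (hσ x).le
  · exact exists_lt_of_ciInf_lt (lt_mul_left hinf hR)

end Metric

section Measure

variable {S : Type*} [PseudoMetricSpace S] [MeasurableSpace S] (ν : Measure S)

theorem measure_ball_le_add_of_annulus_subset {k : ℕ} {w : S} {c : Fin k → S}
    {R ρ r r' : ℝ} (hc : {y | ρ < dist y w ∧ dist y w < R * ρ} ⊆ ⋃ i, ball (c i) (ρ / 3))
    (hρr : ρ < r) (hr' : r' ≤ R * ρ) {a b : ℝ≥0∞} (hin : ν (ball w r) ≤ a)
    (hout : ∀ i, ν (ball (c i) (ρ / 3)) ≤ b) :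
    ν (ball w r') ≤ a + k * b :=
  calc ν (ball w r') ≤ ν (ball w r ∪ ⋃ i, ball (c i) (ρ / 3)) :=
        measure_mono (ball_subset_ball_union_iUnion_of_annulus_subset hc hρr hr')
    _ ≤ ν (ball w r) + ∑ i, ν (ball (c i) (ρ / 3)) :=
        (measure_union_le _ _).trans (by gcongr; exact measure_iUnion_fintype_le ν _)
    _ ≤ a + k * b := by
        gcongr
        simpa using Finset.sum_le_card_nsmul Finset.univ _ b fun i _ => hout i

theorem measure_ball_le_of_annuliCoveredBy {R : ℝ} {k : ℕ} (hcov : AnnuliCoveredBy S R k)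
    {q u : ℝ} (hq : 1 ≤ q) (hqR : q < R) (hu : 0 < u) {a : ℝ≥0∞}
    (hsmall : ∀ w, ν (ball w u) ≤ a) (n : ℕ) {w : S} {r : ℝ} (hr : r ≤ 3 * R * u)
    (hrn : r ≤ q ^ n * u) :
    ν (ball w r) ≤ (1 + n * k) * a := by
  induction n generalizing w r with
  | zero => simpa using (measure_mono (ball_subset_ball (by simpa using hrn))).trans (hsmall w)
  | succ n ih =>
    rcases le_or_gt r u with hru | hur
    · calc ν (ball w r) ≤ a := (measure_mono (ball_subset_ball hru)).trans (hsmall w)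
        _ ≤ (1 + ↑(n + 1) * k) * a := le_mul_of_one_le_left bot_le le_self_add
    have hq0 : 0 < q := zero_lt_one.trans_le hq
    have hR : 0 < R := hq0.trans hqR
    have hr0 : 0 < r := hu.trans hur
    -- `B(w, r)` is covered by `B(w, r / q)` and `k` balls of radius `r / (3R) ≤ u`.
    obtain ⟨c, hc⟩ := hcov w (r / R) (div_pos hr0 hR)
    have hin : ν (ball w (r / q)) ≤ (1 + n * k) * a := by
      refine ih ((div_le_self hr0.le hq).trans hr) ?_
      rw [div_le_iff₀ hq0]
      linarith [show q ^ (n + 1) * u = q ^ n * u * q by ring]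
    have hout (i : Fin k) : ν (ball (c i) (r / R / 3)) ≤ a := by
      refine (measure_mono (ball_subset_ball ?_)).trans (hsmall (c i))
      rw [div_div, div_le_iff₀ (by positivity)]
      linarith
    calc ν (ball w r) ≤ (1 + n * k) * a + k * a :=
          measure_ball_le_add_of_annulus_subset ν hc (div_lt_div_of_pos_left hr0 hq0 hqR)
            (by rw [mul_div_cancel₀ _ hR.ne']) hin hout
      _ = (1 + ↑(n + 1) * k) * a := by push_cast; ring

theorem one_le_mul_of_measure_ball_le [OpensMeasurableSpace S] [CompactSpace S]
    [IsProbabilityMeasure ν] {R : ℝ} {k : ℕ} (hR : 1 < R) (hcov : AnnuliCoveredBy S R k)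
    {n : ℕ} (hn : 3 * R ≤ ((1 + R) / 2) ^ n) {σ : S → ℝ} (hσ : ∀ x, 0 < σ x) {a : ℝ≥0∞}
    (hT : ∀ x, ν (ball x (σ x)) ≤ a) (hout : ∀ x, ν (ball x (3 * R * σ x))ᶜ ≤ a) :
    1 ≤ ((1 + k) * (1 + n * k) + 1 : ℕ) * a := by
  have := nonempty_of_isProbabilityMeasure ν
  obtain ⟨v, hv, hvball, x₁, hx₁⟩ := exists_pos_forall_ball_subset_ball_and_exists_lt hσ hR
  have hsmall (w : S) : ν (ball w v) ≤ a := by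
    obtain ⟨p, hp⟩ := hvball w
    exact (measure_mono hp).trans (hT p)
  have hbig {w : S} {r : ℝ} (hr : r ≤ 3 * R * v) : ν (ball w r) ≤ (1 + n * k) * a :=
    measure_ball_le_of_annuliCoveredBy ν hcov (q := (1 + R) / 2) (by linarith) (by linarith) hv
      hsmall n hr (hr.trans (by gcongr))
  obtain ⟨c, hc⟩ := hcov x₁ (3 * σ x₁) (by linarith [hσ x₁])
  have hball : ν (ball x₁ (3 * R * σ x₁)) ≤ (1 + n * k) * a + k * ((1 + n * k) * a) :=
    measure_ball_le_add_of_annulus_subset ν hc (by linarith) (by linarith) (hbig le_rfl)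
      fun i => hbig (by nlinarith)
  calc 1 = ν (ball x₁ (3 * R * σ x₁)) + ν (ball x₁ (3 * R * σ x₁))ᶜ :=
        (prob_add_prob_compl measurableSet_ball).symm
    _ ≤ (1 + n * k) * a + k * ((1 + n * k) * a) + a := add_le_add hball (hout x₁)
    _ = ((1 + k) * (1 + n * k) + 1 : ℕ) * a := by push_cast; ring

end Measure

theorem withDensity_ofReal_apply_eq_ofReal_setIntegral {S : Type*} [MeasurableSpace S]
    {μ : Measure S} {f : S → ℝ} (hfi : Integrable f μ) (hf : 0 ≤ᵐ[μ] f) {t : Set S}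
    (ht : MeasurableSet t) :
    μ.withDensity (fun x => ENNReal.ofReal (f x)) t = ENNReal.ofReal (∫ x in t, f x ∂μ) := by
  rw [withDensity_apply _ ht,
    ofReal_integral_eq_lintegral_ofReal hfi.integrableOn (ae_restrict_of_ae hf)]

theorem stmt3_general {S : Type*} [MetricSpace S] [CompactSpace S] [MeasurableSpace S]
    [BorelSpace S] (μ : Measure S)
    (R₀ : ℝ) (hR₀ : 3 < R₀)
    (k : ℕ)
    (hcov : ∀ (x₀ : S) (ρ : ℝ), 0 < ρ → ∃ c : Fin k → S,
      {y | ρ < dist y x₀ ∧ dist y x₀ < R₀ / 3 * ρ} ⊆ ⋃ i, ball (c i) (ρ / 3)) :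
    ∃ τ : ℝ, 0 < τ ∧
      ∀ (f : S → ℝ) (σ : S → ℝ),
        (∀ᵐ x ∂μ, 0 < f x) → Integrable f μ → (∫ x, f x ∂μ) = 1 →
        (∀ x, 0 < σ x) →
        (∀ x, ∫ y in ball x (σ x), f y ∂μ = ∫ y in (ball x (R₀ * σ x))ᶜ, f y ∂μ) →
        ∀ x₀ : S,
          (∀ x, ∫ y in ball x (σ x), f y ∂μ ≤ ∫ y in ball x₀ (σ x₀), f y ∂μ) →
          τ < ∫ y in ball x₀ (σ x₀), f y ∂μ := by
  obtain ⟨n, hn⟩ := pow_unbounded_of_one_lt (3 * (R₀ / 3)) (by linarith : 1 < (1 + R₀ / 3) / 2)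
  set C : ℕ := (1 + k) * (1 + n * k) + 1
  refine ⟨1 / (2 * C), by positivity, fun f σ hf hfi hf1 hσ hbal x₀ hmax => ?_⟩
  by_contra! hT
  have hν {t : Set S} (ht : MeasurableSet t) :=
    withDensity_ofReal_apply_eq_ofReal_setIntegral hfi (hf.mono fun _ h => h.le) ht
  have : IsProbabilityMeasure (μ.withDensity fun x => ENNReal.ofReal (f x)) :=
    ⟨by rw [hν .univ, setIntegral_univ, hf1, ENNReal.ofReal_one]⟩
  have hle : ∀ x, ∫ y in ball x (σ x), f y ∂μ ≤ 1 / (2 * C) := fun x => (hmax x).trans hT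
  have hone := one_le_mul_of_measure_ball_le _ (by linarith) hcov hn.le hσ
    (a := ENNReal.ofReal (1 / (2 * C)))
    (fun x => by rw [hν measurableSet_ball]; exact ENNReal.ofReal_le_ofReal (hle x))
    (fun x => by
      rw [show 3 * (R₀ / 3) = R₀ by ring, hν measurableSet_ball.compl, ← hbal x]
      exact ENNReal.ofReal_le_ofReal (hle x))
  rw [← ENNReal.ofReal_natCast, ← ENNReal.ofReal_mul (by positivity), ENNReal.one_le_ofReal,
    mul_one_div, div_mul_cancel_right₀ (by positivity)] at hone
  norm_num at hone

/-- There exists `τ > 0`, depending only on `Σ` and `R₀` (through a covering constant `k`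
of annuli `A_{x₀}(ρ, (R₀/3)ρ)` by `k` balls of radius `ρ/3`, and one can take
`τ = 1/(k+2)`), such that for every `f ∈ A` (a.e. positive, total integral `1`) with
balancing radii `σ(x,f)`, the maximum over `x` of `T(x,f) = ∫_{B_x(σ(x,f))} f` exceeds `τ`. -/
theorem stmt3 {S : Type*} [MetricSpace S] [CompactSpace S] [MeasurableSpace S]
    [BorelSpace S] (μ : Measure S) [IsProbabilityMeasure μ] [μ.IsOpenPosMeasure]
    (R₀ : ℝ) (hR₀ : 3 < R₀)
    (k : ℕ)
    (hcov : ∀ (x₀ : S) (ρ : ℝ), 0 < ρ → ∃ c : Fin k → S,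
      {y | ρ < dist y x₀ ∧ dist y x₀ < R₀ / 3 * ρ} ⊆ ⋃ i, ball (c i) (ρ / 3)) :
    ∃ τ : ℝ, 0 < τ ∧
      ∀ (f : S → ℝ) (σ : S → ℝ),
        (∀ᵐ x ∂μ, 0 < f x) → Integrable f μ → (∫ x, f x ∂μ) = 1 →
        (∀ x, 0 < σ x) →
        (∀ x, ∫ y in ball x (σ x), f y ∂μ = ∫ y in (ball x (R₀ * σ x))ᶜ, f y ∂μ) →
        ∀ x₀ : S,
          (∀ x, ∫ y in ball x (σ x), f y ∂μ ≤ ∫ y in ball x₀ (σ x₀), f y ∂μ) →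
          τ < ∫ y in ball x₀ (σ x₀), f y ∂μ :=
  stmt3_general μ R₀ hR₀ k hcov
end

section
/- (Two-set separation from four concentration sets.) Let δ₀, γ₀ > 0 and let Ω_{i,j} ⊆ Σ for i,j ∈ {1,2} satisfy d(Ω_{i,1}, Ω_{i,2}) ≥ δ₀ for i = 1,2. Suppose u₁, u₂ ∈ H¹(Σ) satisfy ∫_{Ω_{i,j}} e^{u_i} dV ≥ γ₀ ∫_Σ e^{u_i} dV for all i,j ∈ {1,2}. Then there exist constants γ̃₀, δ̃₀ > 0 depending only on γ₀, δ₀ (and Σ), and sets Ω̃₁, Ω̃₂ ⊆ Σ with d(Ω̃₁, Ω̃₂) ≥ δ̃₀ such that ∫_{Ω̃ₖ} e^{u_i} dV ≥ γ̃₀ ∫_Σ e^{u_i} dV for both i = 1,2 and both k = 1,2. -/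
open MeasureTheory Metric Real

lemma pigeon4 {S : Type*} [MeasurableSpace S] (μ : Measure S)
    {f : S → ℝ} (hf : Integrable f μ) (h0 : ∀ x, 0 ≤ f x)
    (T : Finset S) (hT : T.Nonempty) (B : S → Set S)
    (hB : ∀ c, MeasurableSet (B c))
    {A : Set S} (hA : MeasurableSet A)
    (hcover : ∀ x ∈ A, ∃ c ∈ T, x ∈ B c) :
    ∃ c ∈ T, (∫ x in A, f x ∂μ) / T.card ≤ ∫ x in A ∩ B c, f x ∂μ := by
  by_contra hcon
  push_neg at hcon
  have hcard : (0:ℝ) < T.card := by exact_mod_cast Finset.card_pos.mpr hT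
  have key : ∫ x in A, f x ∂μ ≤ ∑ c ∈ T, ∫ x in A ∩ B c, f x ∂μ := by
    have hint : ∀ c : S, Integrable ((A ∩ B c).indicator f) μ :=
      fun c => hf.indicator (hA.inter (hB c))
    calc ∫ x in A, f x ∂μ = ∫ x, A.indicator f x ∂μ := (integral_indicator hA).symm
      _ ≤ ∫ x, (∑ c ∈ T, (A ∩ B c).indicator f x) ∂μ := by
          apply integral_mono (hf.indicator hA)
            (integrable_finset_sum T fun c _ => hint c)
          intro x
          by_cases hx : x ∈ A
          · obtain ⟨c, hcT, hcB⟩ := hcover x hx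
            have h1 : A.indicator f x = (A ∩ B c).indicator f x := by
              rw [Set.indicator_of_mem hx, Set.indicator_of_mem (Set.mem_inter hx hcB)]
            rw [h1]
            exact Finset.single_le_sum (f := fun c => (A ∩ B c).indicator f x)
              (fun c _ => Set.indicator_apply_nonneg fun _ => h0 x) hcT
          · rw [Set.indicator_of_notMem hx]
            exact Finset.sum_nonneg fun c _ =>
              Set.indicator_apply_nonneg fun _ => h0 x
      _ = ∑ c ∈ T, ∫ x, (A ∩ B c).indicator f x ∂μ :=
          integral_finset_sum T fun c _ => hint c
      _ = ∑ c ∈ T, ∫ x in A ∩ B c, f x ∂μ := by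
          refine Finset.sum_congr rfl fun c _ => ?_
          exact integral_indicator (hA.inter (hB c))
  have hlt : ∑ c ∈ T, ∫ x in A ∩ B c, f x ∂μ
      < ∑ _c ∈ T, (∫ x in A, f x ∂μ) / T.card :=
    Finset.sum_lt_sum_of_nonempty hT fun c hc => hcon c hc
  rw [Finset.sum_const, nsmul_eq_mul, mul_div_cancel₀ _ (ne_of_gt hcard)] at hlt
  linarith

lemma aux4 {S : Type*} [MetricSpace S] [MeasurableSpace S] [BorelSpace S] (μ : Measure S)
    (f g : S → ℝ) (hf : Integrable f μ) (hg : Integrable g μ)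
    (hf0 : ∀ x, 0 ≤ f x) (hg0 : ∀ x, 0 ≤ g x)
    (γf γg δ r : ℝ) (hr : 0 < r) (hr' : r ≤ δ/16) (hδ : 0 < δ)
    (a b : Fin 2 → S) (P Q : Fin 2 → Set S)
    (hPb : ∀ j, P j ⊆ ball (a j) r) (hQb : ∀ k, Q k ⊆ ball (b k) r)
    (hPmass : ∀ j, γf ≤ ∫ x in P j, f x ∂μ) (hQmass : ∀ k, γg ≤ ∫ x in Q k, g x ∂μ)
    (ha : δ - 2*r ≤ dist (a 0) (a 1)) (hb : δ - 2*r ≤ dist (b 0) (b 1)) :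
    ∃ U V : Set S, MeasurableSet U ∧ MeasurableSet V ∧
      (∀ x ∈ U, ∀ y ∈ V, δ/8 ≤ dist x y) ∧
      (γf ≤ ∫ x in U, f x ∂μ) ∧ (γf ≤ ∫ x in V, f x ∂μ) ∧
      (γg ≤ ∫ x in U, g x ∂μ) ∧ (γg ≤ ∫ x in V, g x ∂μ) := by
  have ha' : ∀ j : Fin 2, δ - 2*r ≤ dist (a j) (a (1 - j)) := by
    intro j; fin_cases j
    · simpa using ha
    · simpa [dist_comm] using ha
  have hb' : ∀ k : Fin 2, δ - 2*r ≤ dist (b k) (b (1 - k)) := by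
    intro k; fin_cases k
    · simpa using hb
    · simpa [dist_comm] using hb
  have hmono : ∀ (h : S → ℝ), Integrable h μ → (∀ x, 0 ≤ h x) →
      ∀ (A A' : Set S), A ⊆ A' → ∫ x in A, h x ∂μ ≤ ∫ x in A', h x ∂μ := by
    intro h hint h0 A A' hAA
    exact setIntegral_mono_set hint.integrableOn
      (Filter.Eventually.of_forall h0) (HasSubset.Subset.eventuallyLE hAA)
  by_cases hclose : ∃ j k, dist (a j) (b k) ≤ δ/4
  · obtain ⟨j, k, hjk⟩ := hclose
    refine ⟨ball (a j) (δ/4 + r), ball (a (1-j)) r ∪ ball (b (1-k)) r,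
      measurableSet_ball, (measurableSet_ball.union measurableSet_ball), ?_, ?_, ?_, ?_, ?_⟩
    · intro x hx y hy
      have hxa : dist x (a j) < δ/4 + r := mem_ball.mp hx
      rcases hy with hy | hy
      · have hya : dist y (a (1-j)) < r := mem_ball.mp hy
        have htri := dist_triangle4 (a j) x y (a (1-j))
        have := ha' j
        rw [dist_comm (a j) x] at htri
        linarith
      · have hyb : dist y (b (1-k)) < r := mem_ball.mp hy
        have htri := dist_triangle4 (a j) x y (b (1-k))
        have h2 : dist (b k) (b (1-k)) ≤ dist (b k) (a j) + dist (a j) (b (1-k)) :=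
          dist_triangle _ _ _
        have h3 := hb' k
        have h4 : dist (b k) (a j) ≤ δ/4 := by rwa [dist_comm]
        have h5 : dist (a j) (b (1-k)) ≤ dist (a j) x + dist x y + dist y (b (1-k)) := htri
        rw [dist_comm (a j) x] at h5
        linarith
    · exact le_trans (hPmass j) (hmono f hf hf0 _ _
        ((hPb j).trans (ball_subset_ball (by linarith))))
    · exact le_trans (hPmass (1-j)) (hmono f hf hf0 _ _
        ((hPb (1-j)).trans Set.subset_union_left))
    · refine le_trans (hQmass k) (hmono g hg hg0 _ _ ((hQb k).trans ?_))
      intro z hz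
      have : dist z (b k) < r := mem_ball.mp hz
      have := dist_triangle z (b k) (a j)
      have h4 : dist (b k) (a j) ≤ δ/4 := by rwa [dist_comm] at hjk
      exact mem_ball.mpr (by linarith)
    · exact le_trans (hQmass (1-k)) (hmono g hg hg0 _ _
        ((hQb (1-k)).trans Set.subset_union_right))
  · push_neg at hclose
    refine ⟨ball (a 0) r ∪ ball (b 0) r, ball (a 1) r ∪ ball (b 1) r,
      (measurableSet_ball.union measurableSet_ball),
      (measurableSet_ball.union measurableSet_ball), ?_, ?_, ?_, ?_, ?_⟩
    · intro x hx y hy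
      rcases hx with hx | hx <;> rcases hy with hy | hy
      · have h1 : dist x (a 0) < r := mem_ball.mp hx
        have h2 : dist y (a 1) < r := mem_ball.mp hy
        have htri := dist_triangle4 (a 0) x y (a 1)
        rw [dist_comm (a 0) x] at htri
        linarith
      · have h1 : dist x (a 0) < r := mem_ball.mp hx
        have h2 : dist y (b 1) < r := mem_ball.mp hy
        have h3 := hclose 0 1
        have htri := dist_triangle4 (a 0) x y (b 1)
        rw [dist_comm (a 0) x] at htri
        linarith
      · have h1 : dist x (b 0) < r := mem_ball.mp hx
        have h2 : dist y (a 1) < r := mem_ball.mp hy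
        have h3 := hclose 1 0
        rw [dist_comm] at h3
        have htri := dist_triangle4 (b 0) x y (a 1)
        rw [dist_comm (b 0) x] at htri
        linarith
      · have h1 : dist x (b 0) < r := mem_ball.mp hx
        have h2 : dist y (b 1) < r := mem_ball.mp hy
        have htri := dist_triangle4 (b 0) x y (b 1)
        rw [dist_comm (b 0) x] at htri
        linarith
    · exact le_trans (hPmass 0) (hmono f hf hf0 _ _
        ((hPb 0).trans Set.subset_union_left))
    · exact le_trans (hPmass 1) (hmono f hf hf0 _ _
        ((hPb 1).trans Set.subset_union_left))
    · exact le_trans (hQmass 0) (hmono g hg hg0 _ _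
        ((hQb 0).trans Set.subset_union_right))
    · exact le_trans (hQmass 1) (hmono g hg hg0 _ _
        ((hQb 1).trans Set.subset_union_right))

/-- Two-set separation from four concentration sets: if `Ω_{i,j}` (`i,j ∈ {1,2}`) satisfy
`d(Ω_{i,1}, Ω_{i,2}) ≥ δ₀` and `∫_{Ω_{i,j}} e^{u_i} ≥ γ₀ ∫_Σ e^{u_i}` for all `i,j`, then
there are `γ̃₀, δ̃₀ > 0` depending only on `γ₀, δ₀` (and `Σ`), and sets `Ω̃₁, Ω̃₂` with
`d(Ω̃₁, Ω̃₂) ≥ δ̃₀` on which both `e^{u₁}` and `e^{u₂}` carry at least a fraction `γ̃₀`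
of their total mass. -/
theorem stmt4 {S : Type*} [MetricSpace S] [CompactSpace S] [MeasurableSpace S]
    [BorelSpace S] (μ : Measure S) [IsProbabilityMeasure μ]
    (δ₀ γ₀ : ℝ) (hδ₀ : 0 < δ₀) (hγ₀ : 0 < γ₀) :
    ∃ γ' δ' : ℝ, 0 < γ' ∧ 0 < δ' ∧
      ∀ (Ω : Fin 2 → Fin 2 → Set S) (u : Fin 2 → S → ℝ),
        (∀ i j, MeasurableSet (Ω i j)) →
        (∀ i, ∀ a ∈ Ω i 0, ∀ b ∈ Ω i 1, δ₀ ≤ dist a b) →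
        (∀ i, Integrable (fun x => exp (u i x)) μ) →
        (∀ i j, γ₀ * ∫ x, exp (u i x) ∂μ ≤ ∫ x in Ω i j, exp (u i x) ∂μ) →
        ∃ Ω' : Fin 2 → Set S,
          (∀ k, MeasurableSet (Ω' k)) ∧
          (∀ a ∈ Ω' 0, ∀ b ∈ Ω' 1, δ' ≤ dist a b) ∧
          (∀ i k, γ' * ∫ x, exp (u i x) ∂μ ≤ ∫ x in Ω' k, exp (u i x) ∂μ) := by
  classical
  have hrpos : (0:ℝ) < δ₀/16 := by linarith
  obtain ⟨T0, -, hTfin, hTcover⟩ :=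
    finite_cover_balls_of_compact (isCompact_univ (X := S)) hrpos
  set r : ℝ := δ₀/16 with hrdef
  set T : Finset S := hTfin.toFinset with hTdef
  refine ⟨γ₀ / (T.card + 1), δ₀ / 8, by positivity, by positivity, ?_⟩
  intro Ω u hmeas hsep hint hconc
  set γ' : ℝ := γ₀ / (T.card + 1) with hγ'def
  have hγ'pos : 0 < γ' := by positivity
  have hcov : ∀ x : S, ∃ c ∈ T, x ∈ ball c r := by
    intro x
    have := hTcover (Set.mem_univ x)
    simp only [Set.mem_iUnion, exists_prop] at this
    obtain ⟨c, hc, hxc⟩ := this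
    exact ⟨c, by simpa [hTdef] using hc, hxc⟩
  have hMpos : ∀ i, 0 < ∫ x, exp (u i x) ∂μ := fun i => integral_exp_pos (hint i)
  have hTne : T.Nonempty := by
    have huniv : (Set.univ : Set S).Nonempty := by
      rcases Set.eq_empty_or_nonempty (Set.univ : Set S) with h | h
      · have h1 := measure_univ (μ := μ)
        rw [h] at h1; simp at h1
      · exact h
    obtain ⟨x, -⟩ := huniv
    obtain ⟨c, hc, -⟩ := hcov x
    exact ⟨c, hc⟩
  have hcardpos : (0:ℝ) < T.card := by exact_mod_cast Finset.card_pos.mpr hTne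
  -- pigeonhole: find centers
  have key : ∀ i j : Fin 2, ∃ c ∈ T,
      γ' * ∫ x, exp (u i x) ∂μ ≤ ∫ x in Ω i j ∩ ball c r, exp (u i x) ∂μ := by
    intro i j
    obtain ⟨c, hcT, hc⟩ := pigeon4 μ (hint i) (fun x => (exp_pos _).le) T hTne
      (fun c => ball c r) (fun c => measurableSet_ball) (hmeas i j)
      (fun x _ => hcov x)
    refine ⟨c, hcT, le_trans ?_ hc⟩
    have h1 : γ' * ∫ x, exp (u i x) ∂μ ≤ (γ₀ * ∫ x, exp (u i x) ∂μ) / T.card := by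
      rw [hγ'def, div_mul_eq_mul_div, div_le_div_iff₀ (by positivity) hcardpos]
      have := (hMpos i).le
      nlinarith [hMpos i, hcardpos]
    refine h1.trans ?_
    gcongr
    exact hconc i j
  choose c hcT hcmass using key
  -- nonemptiness of pieces
  have hne : ∀ i j : Fin 2, (Ω i j ∩ ball (c i j) r).Nonempty := by
    intro i j
    rcases Set.eq_empty_or_nonempty (Ω i j ∩ ball (c i j) r) with h | h
    · exfalso
      have h2 := hcmass i j
      rw [h] at h2
      simp only [Measure.restrict_empty, integral_zero_measure] at h2
      nlinarith [hMpos i, hγ'pos]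
    · exact h
  -- center separation
  have hcc : ∀ i : Fin 2, δ₀ - 2*r ≤ dist (c i 0) (c i 1) := by
    intro i
    obtain ⟨p, hpΩ, hpb⟩ := hne i 0
    obtain ⟨q, hqΩ, hqb⟩ := hne i 1
    have h1 := hsep i p hpΩ q hqΩ
    have h2 := dist_triangle4 p (c i 0) (c i 1) q
    have h3 : dist p (c i 0) < r := mem_ball.mp hpb
    have h4 : dist (c i 1) q < r := by rw [dist_comm]; exact mem_ball.mp hqb
    have h5 : dist p q ≤ dist p (c i 0) + dist (c i 0) (c i 1) + dist (c i 1) q := h2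
    linarith
  obtain ⟨U, V, hUm, hVm, hUV, hU0, hV0, hU1, hV1⟩ :=
    aux4 μ (fun x => exp (u 0 x)) (fun x => exp (u 1 x)) (hint 0) (hint 1)
      (fun x => (exp_pos _).le) (fun x => (exp_pos _).le)
      (γ' * ∫ x, exp (u 0 x) ∂μ) (γ' * ∫ x, exp (u 1 x) ∂μ) δ₀ r hrpos le_rfl hδ₀
      (fun j => c 0 j) (fun k => c 1 k)
      (fun j => Ω 0 j ∩ ball (c 0 j) r) (fun k => Ω 1 k ∩ ball (c 1 k) r)
      (fun j => Set.inter_subset_right) (fun k => Set.inter_subset_right)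
      (fun j => hcmass 0 j) (fun k => hcmass 1 k) (hcc 0) (hcc 1)
  refine ⟨![U, V], ?_, ?_, ?_⟩
  · intro k; fin_cases k
    · simpa using hUm
    · simpa using hVm
  · intro a ha b hb
    simp only [Matrix.cons_val_zero, Matrix.cons_val_one, Matrix.head_cons] at ha hb
    exact hUV a ha b hb
  · intro i k
    fin_cases i <;> fin_cases k <;>
      simp only [Matrix.cons_val_zero, Matrix.cons_val_one, Matrix.head_cons]
    · exact hU0
    · exact hV0
    · exact hU1
    · exact hV1
end

section
/- (Harnack-type averaging inequality, dilation invariant.) There exists C > 0 such that for every x ∈ Σ, every small d > 0, and every u ∈ H¹(B_x(d)), the difference between the mean value of u on the ball B_x(d) and the mean value of u on the boundary sphere ∂B_x(d) is bounded: |⨍_{B_x(d)} u dV − ⨍_{∂B_x(d)} u dS| ≤ C (∫_{B_x(d)} |∇u|² dV)^{1/2}. The constant C is independent of d. -/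
open MeasureTheory Metric Complex Set
open scoped Real

/-! In polar coordinates `y = x + r e^{iθ}` the difference of the two means is
`(π d²)⁻¹ ∫∫ r (u(r, θ) - u(d, θ)) dr dθ`. Along each ray, the fundamental theorem of calculus
followed by Cauchy–Schwarz with the weight `s` gives
`√r |u(r, θ) - u(d, θ)| ≤ √d (∫₀ᵈ s |∇u|² ds)^{1/2}`, and a second Cauchy–Schwarz in `(r, θ)`
bounds the difference by `π^{-1/2} ‖∇u‖_{L²(B_x(d))}`. Every step is homogeneous under dilation,
so the constant does not depend on `d`. -/

theorem integral_mul_le_sqrt_integral_sq_mul_sqrt_integral_sq {α : Type*}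
    [MeasurableSpace α] {μ : Measure α} {f g : α → ℝ} (hf₀ : 0 ≤ᵐ[μ] f) (hg₀ : 0 ≤ᵐ[μ] g)
    (hf : MemLp f 2 μ) (hg : MemLp g 2 μ) :
    ∫ a, f a * g a ∂μ ≤ √(∫ a, f a ^ 2 ∂μ) * √(∫ a, g a ^ 2 ∂μ) := by
  have h := integral_mul_le_Lp_mul_Lq_of_nonneg Real.HolderConjugate.two_two hf₀ hg₀
    (by simpa using hf) (by simpa using hg)
  simpa only [Real.rpow_two, Real.sqrt_eq_rpow] using h

theorem sqrt_mul_norm_sub_le_sqrt_mul_sqrt_integral {E : Type*} [NormedAddCommGroup E]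
    [NormedSpace ℝ E] {f : ℝ → E} {B : ℝ → ℝ} {r d : ℝ} (hr : 0 < r) (hrd : r ≤ d)
    (hfc : ContinuousOn f (Icc r d)) (hfd : DifferentiableOn ℝ f (Ioo r d))
    (hfB : ∀ t ∈ Ioo r d, ‖deriv f t‖ ≤ B t) (hB : ContinuousOn B (Icc r d)) :
    √r * ‖f d - f r‖ ≤ √(d - r) * √(∫ t in Ioo r d, t * B t ^ 2) := by
  have hB₀ : ∀ t ∈ Ioo r d, 0 ≤ B t := fun t ht => (norm_nonneg _).trans (hfB t ht)
  have hBi : IntegrableOn B (Ioo r d) := (hB.integrableOn_Icc).mono_set Ioo_subset_Icc_self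
  have hsB : ContinuousOn (fun t => √t * B t) (Icc r d) :=
    Real.continuous_sqrt.continuousOn.mul hB
  have hsBi : IntegrableOn (fun t => √t * B t) (Ioo r d) :=
    hsB.integrableOn_Icc.mono_set Ioo_subset_Icc_self
  have hdisp : ‖f d - f r‖ ≤ ∫ t in Ioo r d, B t := by
    rw [← integral_Ioc_eq_integral_Ioo, ← intervalIntegral.integral_of_le hrd]
    exact norm_sub_le_integral_of_norm_deriv_le_of_le hrd hfc hfd (.of_forall hfB)
      (hB.intervalIntegrable_of_Icc hrd)
  have hweight : √r * ∫ t in Ioo r d, B t ≤ ∫ t in Ioo r d, √t * B t := by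
    rw [← integral_const_mul]
    refine setIntegral_mono_on (hBi.const_mul _) hsBi measurableSet_Ioo fun t ht => ?_
    exact mul_le_mul_of_nonneg_right (Real.sqrt_le_sqrt ht.1.le) (hB₀ t ht)
  have hcs := integral_mul_le_sqrt_integral_sq_mul_sqrt_integral_sq
    (μ := volume.restrict (Ioo r d)) (f := fun _ => (1 : ℝ)) (g := fun t => √t * B t)
    (.of_forall fun _ => zero_le_one)
    ((ae_restrict_iff' measurableSet_Ioo).2 (.of_forall fun t ht =>
      mul_nonneg (Real.sqrt_nonneg t) (hB₀ t ht)))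
    (memLp_const 1) ((memLp_two_iff_integrable_sq hsBi.aestronglyMeasurable).2
      ((hsB.pow 2).integrableOn_Icc.mono_set Ioo_subset_Icc_self))
  have hsq : ∫ t in Ioo r d, (√t * B t) ^ 2 = ∫ t in Ioo r d, t * B t ^ 2 :=
    setIntegral_congr_fun measurableSet_Ioo fun t ht => by
      rw [mul_pow, Real.sq_sqrt (hr.trans ht.1).le]
  simp only [one_mul, one_pow, hsq, setIntegral_const, smul_eq_mul, mul_one,
    Real.volume_real_Ioo_of_le hrd] at hcs
  calc √r * ‖f d - f r‖ ≤ √r * ∫ t in Ioo r d, B t := by gcongr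
    _ ≤ _ := hweight.trans hcs

theorem hasDerivAt_circleMap_radius (c : ℂ) (R θ : ℝ) :
    HasDerivAt (fun R => circleMap c R θ) (exp (θ * I)) R := by
  simpa [circleMap] using ((hasDerivAt_id R).ofReal_comp.mul_const (exp (θ * I))).const_add c

theorem sqrt_mul_norm_sub_circleMap_le {F : Type*} [NormedAddCommGroup F] [NormedSpace ℝ F]
    {u : ℂ → F} (hu : ContDiff ℝ 1 u) (x : ℂ) (θ : ℝ) {r d : ℝ} (hr : 0 < r) (hrd : r ≤ d) :
    √r * ‖u (circleMap x d θ) - u (circleMap x r θ)‖ ≤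
      √d * √(∫ s in Ioo 0 d, s * ‖fderiv ℝ u (circleMap x s θ)‖ ^ 2) := by
  have hderiv : ∀ s, HasDerivAt (fun s => u (circleMap x s θ))
      (fderiv ℝ u (circleMap x s θ) (exp (θ * I))) s := fun s =>
    (hu.differentiable one_ne_zero _).hasFDerivAt.comp_hasDerivAt s
      (hasDerivAt_circleMap_radius x s θ)
  have hB : Continuous fun s => ‖fderiv ℝ u (circleMap x s θ)‖ :=
    ((hu.continuous_fderiv one_ne_zero).comp (by fun_prop)).norm
  have hray := sqrt_mul_norm_sub_le_sqrt_mul_sqrt_integral hr hrd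
    (fun s _ => (hderiv s).continuousAt.continuousWithinAt)
    (fun s _ => (hderiv s).differentiableAt.differentiableWithinAt)
    (fun s _ => by
      rw [(hderiv s).deriv]
      simpa using (fderiv ℝ u (circleMap x s θ)).le_opNorm (exp (θ * I)))
    hB.continuousOn
  have henergy : ∫ s in Ioo r d, s * ‖fderiv ℝ u (circleMap x s θ)‖ ^ 2 ≤
      ∫ s in Ioo 0 d, s * ‖fderiv ℝ u (circleMap x s θ)‖ ^ 2 :=
    setIntegral_mono_set ((continuous_id.mul (hB.pow 2)).integrableOn_Icc.mono_set
      Ioo_subset_Icc_self)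
      ((ae_restrict_iff' measurableSet_Ioo).2 (.of_forall fun s hs =>
        mul_nonneg hs.1.le (sq_nonneg _)))
      (Ioo_subset_Ioo_left hr.le).eventuallyLE
  exact hray.trans (by gcongr; linarith)

theorem norm_smul_sub_circleMap_le {F : Type*} [NormedAddCommGroup F] [NormedSpace ℝ F]
    {u : ℂ → F} (hu : ContDiff ℝ 1 u) (x : ℂ) (θ : ℝ) {r d : ℝ} (hr : 0 < r) (hrd : r ≤ d) :
    ‖r • (u (circleMap x r θ) - u (circleMap x d θ))‖ ≤
      √d * (√r * √(∫ s in Ioo 0 d, s * ‖fderiv ℝ u (circleMap x s θ)‖ ^ 2)) := by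
  calc ‖r • (u (circleMap x r θ) - u (circleMap x d θ))‖ =
        √r * (√r * ‖u (circleMap x d θ) - u (circleMap x r θ)‖) := by
        rw [norm_smul, Real.norm_of_nonneg hr.le, norm_sub_rev, ← mul_assoc,
          Real.mul_self_sqrt hr.le]
    _ ≤ √r * (√d * √(∫ s in Ioo 0 d, s * ‖fderiv ℝ u (circleMap x s θ)‖ ^ 2)) :=
        mul_le_mul_of_nonneg_left (sqrt_mul_norm_sub_circleMap_le hu x θ hr hrd)
          (Real.sqrt_nonneg r)
    _ = _ := by ring

theorem setIntegral_prod_smul {α β E : Type*} [MeasurableSpace α] [MeasurableSpace β]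
    [NormedAddCommGroup E] [NormedSpace ℝ E] {μ : Measure α} {ν : Measure β}
    [SFinite μ] [SFinite ν] (f : α → ℝ) (g : β → E) (s : Set α) (t : Set β) :
    ∫ z in s ×ˢ t, f z.1 • g z.2 ∂μ.prod ν = (∫ x in s, f x ∂μ) • ∫ y in t, g y ∂ν := by
  rw [← Measure.prod_restrict s t]
  exact integral_prod_smul f g

theorem Continuous.integrableOn_Ioo_prod_Ioo {E : Type*} [NormedAddCommGroup E]
    {f : ℝ × ℝ → E} (hf : Continuous f) (a b c d : ℝ) : IntegrableOn f (Ioo a b ×ˢ Ioo c d) :=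
  (hf.integrableOn_Icc (a := (a, c)) (b := (b, d))).mono_set
    (Icc_prod_Icc a b c d ▸ prod_mono Ioo_subset_Icc_self Ioo_subset_Icc_self)

theorem integral_Ioo_zero_id {d : ℝ} (hd : 0 ≤ d) : ∫ r in Ioo 0 d, r = d ^ 2 / 2 := by
  rw [← integral_Ioc_eq_integral_Ioo, ← intervalIntegral.integral_of_le hd, integral_id]
  ring

theorem polarCoord_symm_eq_circleMap (p : ℝ × ℝ) :
    Complex.polarCoord.symm p = circleMap 0 p.1 p.2 := by
  rw [Complex.polarCoord_symm_apply, circleMap_zero, exp_mul_I]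
  push_cast
  ring

theorem setIntegral_ball_eq_setIntegral_polar {E : Type*} [NormedAddCommGroup E]
    [NormedSpace ℝ E] (f : ℂ → E) (x : ℂ) (d : ℝ) :
    ∫ y in ball x d, f y = ∫ p in Ioo 0 d ×ˢ Ioo (-π) π, p.1 • f (circleMap x p.1 p.2) := by
  have htranslate : ∫ y in ball x d, f y = ∫ z in ball 0 d, f (x + z) := by
    rw [← (measurePreserving_add_left volume x).setIntegral_preimage_emb
      (measurableEmbedding_addLeft x)]
    simp
  have hS : MeasurableSet (Ioo 0 d ×ˢ Ioo (-π) π) := measurableSet_Ioo.prod measurableSet_Ioo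
  rw [htranslate, ← integral_indicator measurableSet_ball,
    ← Complex.integral_comp_polarCoord_symm, polarCoord_target,
    ← inter_eq_right.2 (prod_mono Ioo_subset_Ioi_self subset_rfl), ← setIntegral_indicator hS]
  refine setIntegral_congr_fun (measurableSet_Ioi.prod measurableSet_Ioo) fun p hp => ?_
  have hmem : circleMap 0 p.1 p.2 ∈ ball 0 d ↔ p ∈ Ioo 0 d ×ˢ Ioo (-π) π := by
    simp [abs_of_pos hp.1.out, hp.1.out, hp.2]
  rw [polarCoord_symm_eq_circleMap]
  by_cases h : p ∈ Ioo 0 d ×ˢ Ioo (-π) π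
  · rw [indicator_of_mem h, indicator_of_mem (hmem.2 h), circleMap, circleMap, zero_add]
  · rw [indicator_of_notMem h, indicator_of_notMem (mt hmem.1 h), smul_zero]

theorem setIntegral_ball_eq_integral_integral_polar {E : Type*} [NormedAddCommGroup E]
    [NormedSpace ℝ E] {f : ℂ → E} (hf : Continuous f) (x : ℂ) (d : ℝ) :
    ∫ y in ball x d, f y = ∫ θ in Ioo (-π) π, ∫ s in Ioo 0 d, s • f (circleMap x s θ) := by
  have hint : IntegrableOn (fun p : ℝ × ℝ => p.1 • f (circleMap x p.1 p.2))
      (Ioo 0 d ×ˢ Ioo (-π) π) := Continuous.integrableOn_Ioo_prod_Ioo (by fun_prop) _ _ _ _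
  rw [IntegrableOn, Measure.volume_eq_prod, ← Measure.prod_restrict] at hint
  rw [setIntegral_ball_eq_setIntegral_polar, Measure.volume_eq_prod, ← Measure.prod_restrict,
    integral_prod_symm _ hint]

theorem circleAverage_eq_setIntegral_Ioo {E : Type*} [NormedAddCommGroup E] [NormedSpace ℝ E]
    (f : ℂ → E) (c : ℂ) (R : ℝ) :
    Real.circleAverage f c R = (2 * π)⁻¹ • ∫ θ in Ioo (-π) π, f (circleMap c R θ) := by
  rw [Real.circleAverage_eq_integral_add (-π),
    intervalIntegral.integral_comp_add_right (fun θ => f (circleMap c R θ)),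
    zero_add, show 2 * π + -π = π by ring,
    intervalIntegral.integral_of_le (by linarith [Real.pi_pos]), integral_Ioc_eq_integral_Ioo]

theorem setAverage_ball_sub_circleAverage {E : Type*} [NormedAddCommGroup E] [NormedSpace ℝ E]
    {u : ℂ → E} (hu : Continuous u) (x : ℂ) {d : ℝ} (hd : 0 < d) :
    (⨍ y in ball x d, u y) - Real.circleAverage u x d =
      (π * d ^ 2)⁻¹ • ∫ p in Ioo 0 d ×ˢ Ioo (-π) π,
        p.1 • (u (circleMap x p.1 p.2) - u (circleMap x d p.2)) := by
  have hvol : volume.real (ball x d) = π * d ^ 2 := by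
    simp [measureReal_def, Complex.volume_ball, hd.le, mul_comm]
  have hcircle : ∫ p in Ioo 0 d ×ˢ Ioo (-π) π, p.1 • u (circleMap x d p.2) =
      (d ^ 2 / 2) • ∫ θ in Ioo (-π) π, u (circleMap x d θ) := by
    rw [Measure.volume_eq_prod,
      setIntegral_prod_smul (fun r => r) (fun θ => u (circleMap x d θ)),
      integral_Ioo_zero_id hd.le]
  simp_rw [smul_sub]
  rw [integral_sub (Continuous.integrableOn_Ioo_prod_Ioo (by fun_prop) _ _ _ _)
      (Continuous.integrableOn_Ioo_prod_Ioo (by fun_prop) _ _ _ _), hcircle,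
    setAverage_eq, hvol, circleAverage_eq_setIntegral_Ioo,
    setIntegral_ball_eq_setIntegral_polar, smul_sub, smul_smul]
  congr 2
  field_simp

theorem continuous_setIntegral_Ioo_mul_circleMap {g : ℂ → ℝ} (hg : Continuous g) (x : ℂ)
    {d : ℝ} (hd : 0 ≤ d) :
    Continuous fun θ => ∫ s in Ioo 0 d, s * g (circleMap x s θ) := by
  have h : (fun θ => ∫ s in Ioo 0 d, s * g (circleMap x s θ)) =
      fun θ => ∫ s in (0)..d, s * g (circleMap x s θ) := by
    ext θ
    rw [intervalIntegral.integral_of_le hd, integral_Ioc_eq_integral_Ioo]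
  rw [h]
  exact intervalIntegral.continuous_parametric_intervalIntegral_of_continuous'
    (continuous_snd.mul (hg.comp (by fun_prop))) _ _

theorem setIntegral_Ioo_prod_Ioo_sqrt_mul_sqrt_le {E : ℝ → ℝ} (hE : Continuous E)
    (hE₀ : ∀ θ, 0 ≤ E θ) {d : ℝ} (hd : 0 ≤ d) :
    ∫ p in Ioo 0 d ×ˢ Ioo (-π) π, √p.1 * √(E p.2) ≤
      √(π * d ^ 2) * √(d * ∫ θ in Ioo (-π) π, E θ) := by
  have hS : MeasurableSet (Ioo 0 d ×ˢ Ioo (-π) π) := measurableSet_Ioo.prod measurableSet_Ioo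
  have hmemLp : ∀ g : ℝ × ℝ → ℝ, Continuous g →
      MemLp g 2 (volume.restrict (Ioo 0 d ×ˢ Ioo (-π) π)) := fun g hg =>
    (memLp_two_iff_integrable_sq hg.aestronglyMeasurable).2
      (Continuous.integrableOn_Ioo_prod_Ioo (hg.pow 2) _ _ _ _)
  have hcs := integral_mul_le_sqrt_integral_sq_mul_sqrt_integral_sq
    (f := fun p : ℝ × ℝ => √p.1) (g := fun p => √(E p.2))
    (.of_forall fun _ => Real.sqrt_nonneg _) (.of_forall fun _ => Real.sqrt_nonneg _)
    (hmemLp _ (by fun_prop)) (hmemLp _ (by fun_prop))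
  have h₁ : ∫ p in Ioo 0 d ×ˢ Ioo (-π) π, √p.1 ^ 2 = π * d ^ 2 := by
    calc ∫ p in Ioo 0 d ×ˢ Ioo (-π) π, √p.1 ^ 2
          = ∫ p in Ioo 0 d ×ˢ Ioo (-π) π, p.1 * 1 :=
          setIntegral_congr_fun hS fun p hp => by rw [Real.sq_sqrt hp.1.1.le, mul_one]
      _ = (∫ r in Ioo 0 d, r) * ∫ _ in Ioo (-π) π, (1 : ℝ) :=
          setIntegral_prod_mul (fun r => r) (fun _ => 1) _ _
      _ = π * d ^ 2 := by
          rw [integral_Ioo_zero_id hd, setIntegral_const,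
            Real.volume_real_Ioo_of_le (by linarith [Real.pi_pos])]
          simp only [smul_eq_mul]
          ring
  have h₂ : ∫ p in Ioo 0 d ×ˢ Ioo (-π) π, √(E p.2) ^ 2 = d * ∫ θ in Ioo (-π) π, E θ := by
    calc ∫ p in Ioo 0 d ×ˢ Ioo (-π) π, √(E p.2) ^ 2
          = ∫ p in Ioo 0 d ×ˢ Ioo (-π) π, 1 * E p.2 :=
          setIntegral_congr_fun hS fun p _ => by rw [Real.sq_sqrt (hE₀ _), one_mul]
      _ = (∫ _ in Ioo 0 d, (1 : ℝ)) * ∫ θ in Ioo (-π) π, E θ :=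
          setIntegral_prod_mul (fun _ => 1) E _ _
      _ = d * ∫ θ in Ioo (-π) π, E θ := by
          rw [setIntegral_const, Real.volume_real_Ioo_of_le hd, smul_eq_mul, sub_zero, mul_one]
  rwa [h₁, h₂] at hcs

theorem norm_setAverage_ball_sub_circleAverage_le {F : Type*} [NormedAddCommGroup F]
    [NormedSpace ℝ F] {u : ℂ → F} (hu : ContDiff ℝ 1 u) (x : ℂ) {d : ℝ} (hd : 0 < d) :
    ‖(⨍ y in ball x d, u y) - Real.circleAverage u x d‖ ≤
      (√π)⁻¹ * √(∫ y in ball x d, ‖fderiv ℝ u y‖ ^ 2) := by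
  set S := Ioo 0 d ×ˢ Ioo (-π) π
  set E : ℝ → ℝ := fun θ => ∫ s in Ioo 0 d, s * ‖fderiv ℝ u (circleMap x s θ)‖ ^ 2
  set B := ∫ y in ball x d, ‖fderiv ℝ u y‖ ^ 2
  have hDu : Continuous fun y => ‖fderiv ℝ u y‖ ^ 2 :=
    (hu.continuous_fderiv one_ne_zero).norm.pow 2
  have hEc : Continuous E := continuous_setIntegral_Ioo_mul_circleMap hDu x hd.le
  have hE₀ : ∀ θ, 0 ≤ E θ := fun θ =>
    setIntegral_nonneg measurableSet_Ioo fun s hs => mul_nonneg hs.1.le (sq_nonneg _)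
  have henergy : B = ∫ θ in Ioo (-π) π, E θ := by
    simpa only [smul_eq_mul] using setIntegral_ball_eq_integral_integral_polar hDu x d
  have hpt : ∀ p ∈ S, ‖p.1 • (u (circleMap x p.1 p.2) - u (circleMap x d p.2))‖ ≤
      √d * (√p.1 * √(E p.2)) := fun p hp =>
    norm_smul_sub_circleMap_le hu x p.2 hp.1.1 hp.1.2.le
  have hint : IntegrableOn (fun p : ℝ × ℝ => √d * (√p.1 * √(E p.2))) S :=
    Continuous.integrableOn_Ioo_prod_Ioo (by fun_prop) _ _ _ _
  calc ‖(⨍ y in ball x d, u y) - Real.circleAverage u x d‖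
      = (π * d ^ 2)⁻¹ *
          ‖∫ p in S, p.1 • (u (circleMap x p.1 p.2) - u (circleMap x d p.2))‖ := by
        rw [setAverage_ball_sub_circleAverage hu.continuous x hd, norm_smul,
          Real.norm_of_nonneg (by positivity)]
    _ ≤ (π * d ^ 2)⁻¹ * (√d * ∫ p in S, √p.1 * √(E p.2)) := by
        rw [← integral_const_mul]
        gcongr
        exact norm_integral_le_of_norm_le hint
          ((ae_restrict_iff' (measurableSet_Ioo.prod measurableSet_Ioo)).2 (.of_forall hpt))
    _ ≤ (π * d ^ 2)⁻¹ * (√d * (√(π * d ^ 2) * √(d * B))) := by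
        rw [henergy]
        gcongr
        exact setIntegral_Ioo_prod_Ioo_sqrt_mul_sqrt_le hEc hE₀ hd.le
    _ = (√π)⁻¹ * √B := by
        rw [Real.sqrt_mul Real.pi_pos.le, Real.sqrt_sq hd.le, Real.sqrt_mul hd.le]
        field_simp
        rw [Real.sq_sqrt hd.le, Real.sq_sqrt Real.pi_pos.le]
        ring

/-- Harnack-type averaging inequality, dilation invariant (stated in the plane, which models a
small coordinate ball of a surface): there is `C > 0`, independent of the radius `d`, such that
for every center `x`, every small `d > 0` and every `C¹` function `u`, the difference between the
mean value of `u` over the ball `B_x(d)` and the mean value of `u` over the boundary circle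
`∂B_x(d)` (written via the parametrization `θ ↦ x + d e^{iθ}`) is bounded by
`C (∫_{B_x(d)} |∇u|²)^{1/2}`. -/
theorem stmt5 :
    ∃ C : ℝ, 0 < C ∧
      ∀ (x : ℂ) (d : ℝ) (u : ℂ → ℝ), 0 < d → d ≤ 1 → ContDiff ℝ 1 u →
        |(⨍ y in ball x d, u y) -
            (2 * Real.pi)⁻¹ * ∫ θ in (0 : ℝ)..(2 * Real.pi), u (x + d * exp (θ * I))| ≤
          C * (∫ y in ball x d, ‖fderiv ℝ u y‖ ^ 2) ^ ((1 : ℝ) / 2) := by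
  refine ⟨(√π)⁻¹, by positivity, fun x d u hd _ hu => ?_⟩
  -- the circle term is `Real.circleAverage u x d` unfolded
  rw [← Real.sqrt_eq_rpow, ← Real.norm_eq_abs]
  exact norm_setAverage_ball_sub_circleAverage_le hu x hd
end

section
/- (Test-function integral estimates.) Let (Σ,g) be a compact surface of unit area, fix δ > 0 small. For points x₁, x₂ ∈ Σ and parameters t₁, t₂ ∈ (0, δ] with |t₁−t₂|² + d(x₁,x₂)² ≥ δ⁴, with min{t₁,t₂} ≤ ν ≪ δ, set t̃ᵢ = 1/tᵢ when tᵢ ≤ δ/2 and t̃ᵢ = −(4/δ²)(tᵢ−δ) otherwise, and define φ₁(y) = log[(1 + t̃₂² d(x₂,y)²)/(1 + t̃₁² d(x₁,y)²)²]. Then there exists C = C(δ, Σ) > 0 such that (1/C)·(t₁²/t₂²) ≤ ∫_Σ e^{φ₁} dV ≤ C·(t₁²/t₂²). -/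
/-!
With `aᵢ = t̃ᵢ`, the quantity `tᵢ (1 + aᵢ)` stays between two positive constants for
`tᵢ ∈ (0, δ]`, so it suffices to show that `∫ e^{φ₁}` is comparable to `(1 + a₂)² / (1 + a₁)²`.

Upper bound: the numerator `1 + a₂² d(x₂, y)²` is at most `(1 + diam²) (1 + a₂)²`, and
`∫ (1 + a² d(p, y)²)⁻²` is `O((1 + a)⁻²)`: sum the quadratic upper volume bound over the dyadic
balls of radius `2^(k+1) / a`.

Lower bound: on the ball of radius `≈ 1 / (1 + a₁)` around `x₁` the denominator is at most `4`,
and by the lower volume bound this ball has measure `≳ (1 + a₁)⁻²`. This suffices when `a₂` is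
bounded, and also when `t₁, t₂` are both small, since then the separation hypothesis keeps `x₂`
at distance `≳ min(δ, 1)²` from that ball. In the remaining case `a₁` is bounded and `a₂` is
large; then the integrand is `≳ a₂²` off a ball around `x₂` of measure at most `1/2`.
-/

open MeasureTheory Metric Real

lemma sq_div_sq_le_of_mul_le {k x₁ x₂ y₁ y₂ : ℝ} (hx₁ : 0 ≤ x₁) (hx₂ : 0 < x₂) (hy₁ : 0 < y₁)
    (h : x₁ * y₁ ≤ k * (x₂ * y₂)) :
    x₁ ^ 2 / x₂ ^ 2 ≤ k ^ 2 * (y₂ ^ 2 / y₁ ^ 2) := by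
  rw [← div_pow, ← div_pow, ← mul_pow]
  refine pow_le_pow_left₀ (div_nonneg hx₁ hx₂.le) ?_ 2
  rw [div_le_iff₀ hx₂, mul_div_assoc', div_mul_eq_mul_div, le_div_iff₀ hy₁]
  linarith

lemma one_div_max_mul_le_and_le_max_mul {I q r c C k : ℝ} (hc : 0 < c) (hC : 0 ≤ C)
    (hk : 0 < k) (hr : 0 ≤ r) (hlo : c * q ≤ I) (hhi : I ≤ C * q) (hrq : r ≤ k * q)
    (hqr : q ≤ k * r) :
    1 / max (C * k) (k / c) * r ≤ I ∧ I ≤ max (C * k) (k / c) * r := by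
  constructor
  · calc 1 / max (C * k) (k / c) * r ≤ c / k * r := by
          refine mul_le_mul_of_nonneg_right ?_ hr
          rw [one_div_le (by positivity) (by positivity), one_div_div]
          exact le_max_right _ _
      _ ≤ c / k * (k * q) := by gcongr
      _ = c * q := by field_simp
      _ ≤ I := hlo
  · calc I ≤ C * (k * r) := hhi.trans (mul_le_mul_of_nonneg_left hqr hC)
      _ ≤ max (C * k) (k / c) * r := by rw [← mul_assoc]; gcongr; exact le_max_left _ _

lemma exists_pow_two_gt_and_pow_four_le (x : ℝ) :
    ∃ k : ℕ, x < 2 ^ (k + 1) ∧ (2 ^ k) ^ 4 ≤ (1 + x ^ 2) ^ 2 := by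
  rcases lt_or_ge x 1 with h | h
  · exact ⟨0, by norm_num; linarith, by nlinarith [sq_nonneg x]⟩
  · obtain ⟨k, hk, hk'⟩ := exists_nat_pow_near h one_lt_two
    refine ⟨k, hk', ?_⟩
    have h4 : ((2 : ℝ) ^ k) ^ 2 ≤ x ^ 2 := pow_le_pow_left₀ (by positivity) hk 2
    calc ((2 : ℝ) ^ k) ^ 4 = (((2 : ℝ) ^ k) ^ 2) ^ 2 := by ring
      _ ≤ (x ^ 2) ^ 2 := pow_le_pow_left₀ (by positivity) h4 2
      _ ≤ (1 + x ^ 2) ^ 2 := pow_le_pow_left₀ (by positivity) (by linarith) 2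

lemma three_halves_mul_le_of_le_sq_add_sq {δ τ u d : ℝ} (hτ : 0 < τ) (hτδ : 2 * τ ≤ δ ^ 2)
    (hu : |u| < τ) (hd : 0 ≤ d) (h : δ ^ 4 ≤ |u| ^ 2 + d ^ 2) : 3 / 2 * τ ≤ d := by
  have hu2 : |u| ^ 2 ≤ τ ^ 2 := pow_le_pow_left₀ (abs_nonneg u) hu.le 2
  have hδ4 : (2 * τ) ^ 2 ≤ δ ^ 4 := by
    rw [show δ ^ 4 = (δ ^ 2) ^ 2 by ring]; exact pow_le_pow_left₀ (by positivity) hτδ 2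
  nlinarith

/-- The paper's `t̃`: `1 / t` up to `t = δ / 2`, then linear, down to `0` at `t = δ`. -/
noncomputable def bubbleScale (δ t : ℝ) : ℝ := if t ≤ δ / 2 then 1 / t else -(4 / δ ^ 2) * (t - δ)

section BubbleScale

variable {δ t : ℝ}

lemma bubbleScale_of_le (ht : t ≤ δ / 2) : bubbleScale δ t = 1 / t := if_pos ht

lemma bubbleScale_nonneg (ht : 0 < t) (htδ : t ≤ δ) : 0 ≤ bubbleScale δ t := by
  unfold bubbleScale
  split_ifs
  · positivity
  · have : 0 ≤ δ - t := by linarith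
    rw [neg_mul, ← mul_neg, neg_sub]
    positivity

lemma mul_one_add_bubbleScale_le (hδ : 0 < δ) (ht : 0 < t) (htδ : t ≤ δ) :
    t * (1 + bubbleScale δ t) ≤ δ + 1 := by
  unfold bubbleScale
  split_ifs with h
  · rw [mul_add, mul_one_div_cancel ht.ne']
    linarith
  · have hquad : t * (-(4 / δ ^ 2) * (t - δ)) ≤ 1 := by
      rw [show t * (-(4 / δ ^ 2) * (t - δ)) = 4 * t * (δ - t) / δ ^ 2 by ring,
        div_le_one (by positivity)]
      nlinarith [sq_nonneg (δ - 2 * t)]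
    nlinarith

lemma min_le_mul_one_add_bubbleScale (ht : 0 < t) (htδ : t ≤ δ) :
    min 1 (δ / 2) ≤ t * (1 + bubbleScale δ t) := by
  have hnonneg := bubbleScale_nonneg ht htδ (δ := δ)
  unfold bubbleScale at hnonneg ⊢
  split_ifs at hnonneg ⊢ with h
  · rw [mul_add, mul_one_div_cancel ht.ne']
    exact (min_le_left _ _).trans (by linarith)
  · exact (min_le_right _ _).trans (by nlinarith)

lemma mul_one_add_bubbleScale_le_mul (hδ : 0 < δ) {t₁ t₂ : ℝ} (ht₁ : 0 < t₁) (ht₁δ : t₁ ≤ δ)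
    (ht₂ : 0 < t₂) (ht₂δ : t₂ ≤ δ) :
    t₁ * (1 + bubbleScale δ t₁) ≤ (δ + 1) / min 1 (δ / 2) * (t₂ * (1 + bubbleScale δ t₂)) := by
  have hm : 0 < min 1 (δ / 2) := lt_min one_pos (half_pos hδ)
  calc t₁ * (1 + bubbleScale δ t₁) ≤ δ + 1 := mul_one_add_bubbleScale_le hδ ht₁ ht₁δ
    _ = (δ + 1) / min 1 (δ / 2) * min 1 (δ / 2) := (div_mul_cancel₀ _ hm.ne').symm
    _ ≤ _ := by gcongr; exact min_le_mul_one_add_bubbleScale ht₂ ht₂δ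

lemma sq_div_sq_le_one_add_bubbleScale (hδ : 0 < δ) {t₁ t₂ : ℝ} (ht₁ : 0 < t₁) (ht₁δ : t₁ ≤ δ)
    (ht₂ : 0 < t₂) (ht₂δ : t₂ ≤ δ) :
    t₁ ^ 2 / t₂ ^ 2 ≤ ((δ + 1) / min 1 (δ / 2)) ^ 2 *
      ((1 + bubbleScale δ t₂) ^ 2 / (1 + bubbleScale δ t₁) ^ 2) :=
  sq_div_sq_le_of_mul_le ht₁.le ht₂ (by linarith [bubbleScale_nonneg ht₁ ht₁δ (δ := δ)])
    (mul_one_add_bubbleScale_le_mul hδ ht₁ ht₁δ ht₂ ht₂δ)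

lemma one_add_bubbleScale_sq_div_sq_le (hδ : 0 < δ) {t₁ t₂ : ℝ} (ht₁ : 0 < t₁) (ht₁δ : t₁ ≤ δ)
    (ht₂ : 0 < t₂) (ht₂δ : t₂ ≤ δ) :
    (1 + bubbleScale δ t₂) ^ 2 / (1 + bubbleScale δ t₁) ^ 2 ≤
      ((δ + 1) / min 1 (δ / 2)) ^ 2 * (t₁ ^ 2 / t₂ ^ 2) :=
  sq_div_sq_le_of_mul_le (by linarith [bubbleScale_nonneg ht₂ ht₂δ (δ := δ)])
    (by linarith [bubbleScale_nonneg ht₁ ht₁δ (δ := δ)]) ht₂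
    (by simpa only [mul_comm] using mul_one_add_bubbleScale_le_mul hδ ht₂ ht₂δ ht₁ ht₁δ)

lemma bubbleScale_le_of_le {τ : ℝ} (hδ : 0 < δ) (hτ : 0 < τ) (hτδ : τ ≤ δ / 2) (ht : τ ≤ t)
    (htδ : t ≤ δ) : bubbleScale δ t ≤ 1 / τ := by
  unfold bubbleScale
  split_ifs with h
  · exact one_div_le_one_div_of_le hτ ht
  · have hτ' : 4 / δ ^ 2 * τ ≤ 2 / δ := by
      rw [div_mul_eq_mul_div, div_le_div_iff₀ (by positivity) hδ]
      nlinarith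
    rw [le_div_iff₀ hτ]
    calc -(4 / δ ^ 2) * (t - δ) * τ = (4 / δ ^ 2 * τ) * (δ - t) := by ring
      _ ≤ (2 / δ) * (δ / 2) := mul_le_mul hτ' (by linarith) (by linarith) (by positivity)
      _ = 1 := by field_simp

end BubbleScale

section BubbleFactor

variable {S : Type*} [MetricSpace S]

noncomputable def bubbleFactor (a : ℝ) (p y : S) : ℝ := 1 + a ^ 2 * dist p y ^ 2

/-- `e^{φ₁}` in the paper, with `a₁ = t̃₁` and `a₂ = t̃₂`. -/
noncomputable def bubbleQuotient (a₁ a₂ : ℝ) (x₁ x₂ y : S) : ℝ :=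
  bubbleFactor a₂ x₂ y / bubbleFactor a₁ x₁ y ^ 2

lemma one_le_bubbleFactor (a : ℝ) (p y : S) : 1 ≤ bubbleFactor a p y :=
  le_add_of_nonneg_right (by positivity)

lemma bubbleFactor_pos (a : ℝ) (p y : S) : 0 < bubbleFactor a p y :=
  one_pos.trans_le (one_le_bubbleFactor a p y)

lemma bubbleQuotient_pos (a₁ a₂ : ℝ) (x₁ x₂ y : S) : 0 < bubbleQuotient a₁ a₂ x₁ x₂ y :=
  div_pos (bubbleFactor_pos _ _ _) (pow_pos (bubbleFactor_pos _ _ _) 2)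

lemma continuous_bubbleFactor (a : ℝ) (p : S) : Continuous (bubbleFactor a p) := by
  unfold bubbleFactor; fun_prop

lemma continuous_inv_bubbleFactor_sq (a : ℝ) (p : S) :
    Continuous fun y => (bubbleFactor a p y ^ 2)⁻¹ :=
  ((continuous_bubbleFactor a p).pow 2).inv₀ fun y => (pow_pos (bubbleFactor_pos a p y) 2).ne'

lemma continuous_bubbleQuotient (a₁ a₂ : ℝ) (x₁ x₂ : S) :
    Continuous (bubbleQuotient a₁ a₂ x₁ x₂) :=
  (continuous_bubbleFactor a₂ x₂).div ((continuous_bubbleFactor a₁ x₁).pow 2)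
    fun y => (pow_pos (bubbleFactor_pos a₁ x₁ y) 2).ne'

lemma bubbleFactor_le_of_dist_le {a r : ℝ} {p y : S} (h : dist p y ≤ r) :
    bubbleFactor a p y ≤ 1 + a ^ 2 * r ^ 2 := by
  unfold bubbleFactor
  gcongr

lemma bubbleFactor_le_diam [CompactSpace S] (a : ℝ) (p y : S) :
    bubbleFactor a p y ≤ 1 + a ^ 2 * diam (Set.univ : Set S) ^ 2 :=
  bubbleFactor_le_of_dist_le <|
    dist_le_diam_of_mem isCompact_univ.isBounded (Set.mem_univ _) (Set.mem_univ _)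

variable [MeasurableSpace S] [OpensMeasurableSpace S] {μ : Measure S} {c₂ : ℝ}

lemma lintegral_inv_bubbleFactor_sq_le (hc₂ : 0 ≤ c₂)
    (hvol : ∀ (p : S) (s : ℝ), 0 < s → μ (ball p s) ≤ ENNReal.ofReal (c₂ * s ^ 2))
    (p : S) {a : ℝ} (ha : 0 < a) :
    ∫⁻ y, ENNReal.ofReal (bubbleFactor a p y ^ 2)⁻¹ ∂μ ≤
      ENNReal.ofReal (16 * c₂ / (3 * a ^ 2)) := by
  -- where `2 ^ k ≤ a d(p, y) < 2 ^ (k + 1)`, the integrand is at most `16⁻ᵏ`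
  have hpoint : ∀ y, ENNReal.ofReal (bubbleFactor a p y ^ 2)⁻¹ ≤ ∑' k : ℕ,
      (ball p (2 ^ (k + 1) / a)).indicator (fun _ => ENNReal.ofReal ((2 ^ k) ^ 4)⁻¹) y := by
    intro y
    obtain ⟨k, hk, hk'⟩ := exists_pow_two_gt_and_pow_four_le (a * dist p y)
    refine le_trans ?_ (ENNReal.le_tsum k)
    rw [Set.indicator_of_mem (by rw [mem_ball, dist_comm, lt_div_iff₀ ha]; linarith)]
    refine ENNReal.ofReal_le_ofReal (inv_anti₀ (by positivity) ?_)
    simpa [bubbleFactor, mul_pow] using hk'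
  have hterm : ∀ k : ℕ, ENNReal.ofReal ((2 ^ k) ^ 4)⁻¹ * μ (ball p (2 ^ (k + 1) / a)) ≤
      ENNReal.ofReal (4 * c₂ / a ^ 2 * (1 / 4) ^ k) := by
    intro k
    calc _ ≤ ENNReal.ofReal ((2 ^ k) ^ 4)⁻¹ * ENNReal.ofReal (c₂ * (2 ^ (k + 1) / a) ^ 2) := by
          gcongr; exact hvol p _ (by positivity)
      _ = _ := by
          rw [← ENNReal.ofReal_mul (by positivity)]
          congr 1
          rw [one_div, inv_pow,
            show (4 : ℝ) ^ k = (2 ^ k) ^ 2 by rw [← pow_mul, mul_comm, pow_mul]; norm_num]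
          field_simp
          ring
  have hsum : HasSum (fun k : ℕ => 4 * c₂ / a ^ 2 * (1 / 4) ^ k) (16 * c₂ / (3 * a ^ 2)) := by
    have h := (hasSum_geometric_of_lt_one (r := (1 / 4 : ℝ)) (by norm_num) (by norm_num)).mul_left
      (4 * c₂ / a ^ 2)
    rwa [show 4 * c₂ / a ^ 2 * (1 - 1 / 4)⁻¹ = 16 * c₂ / (3 * a ^ 2) by field_simp; ring] at h
  calc ∫⁻ y, ENNReal.ofReal (bubbleFactor a p y ^ 2)⁻¹ ∂μ ≤ ∫⁻ y, ∑' k : ℕ,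
          (ball p (2 ^ (k + 1) / a)).indicator (fun _ => ENNReal.ofReal ((2 ^ k) ^ 4)⁻¹) y ∂μ :=
        lintegral_mono hpoint
    _ = ∑' k, ENNReal.ofReal ((2 ^ k) ^ 4)⁻¹ * μ (ball p (2 ^ (k + 1) / a)) := by
        rw [lintegral_tsum fun k => (measurable_const.indicator measurableSet_ball).aemeasurable]
        exact tsum_congr fun k => lintegral_indicator_const measurableSet_ball _
    _ ≤ ∑' k : ℕ, ENNReal.ofReal (4 * c₂ / a ^ 2 * (1 / 4) ^ k) := ENNReal.tsum_le_tsum hterm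
    _ = ENNReal.ofReal (16 * c₂ / (3 * a ^ 2)) := by
        rw [← ENNReal.ofReal_tsum_of_nonneg (fun k => by positivity) hsum.summable, hsum.tsum_eq]

end BubbleFactor

section Integrable

variable {X E : Type*} [TopologicalSpace X] [CompactSpace X] [MeasurableSpace X]
  [OpensMeasurableSpace X] {μ : Measure X} [IsFiniteMeasure μ] [NormedAddCommGroup E]

lemma Continuous.integrable_of_compactSpace {f : X → E} (hf : Continuous f) : Integrable f μ :=
  hf.integrable_of_hasCompactSupport (HasCompactSupport.of_compactSpace f)

end Integrable

section FiniteMeasure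

variable {S : Type*} [MetricSpace S] [CompactSpace S] [MeasurableSpace S] [OpensMeasurableSpace S]
  {μ : Measure S} [IsFiniteMeasure μ]

lemma integrable_bubbleQuotient (a₁ a₂ : ℝ) (x₁ x₂ : S) :
    Integrable (bubbleQuotient a₁ a₂ x₁ x₂) μ :=
  (continuous_bubbleQuotient a₁ a₂ x₁ x₂).integrable_of_compactSpace

lemma mul_measureReal_le_integral_bubbleQuotient {E : Set S} (hE : MeasurableSet E) {m : ℝ}
    {a₁ a₂ : ℝ} {x₁ x₂ : S} (hm : ∀ y ∈ E, m ≤ bubbleQuotient a₁ a₂ x₁ x₂ y) :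
    m * μ.real E ≤ ∫ y, bubbleQuotient a₁ a₂ x₁ x₂ y ∂μ :=
  (setIntegral_ge_of_const_le_real hE (measure_ne_top μ E) hm
    (integrable_bubbleQuotient a₁ a₂ x₁ x₂).integrableOn).trans
    (setIntegral_le_integral (integrable_bubbleQuotient a₁ a₂ x₁ x₂)
      (ae_of_all _ fun y => (bubbleQuotient_pos a₁ a₂ x₁ x₂ y).le))

lemma integral_bubbleQuotient_ge_of_ball {c₁ s₀ : ℝ}
    (hvol : ∀ (p : S) (s : ℝ), 0 < s → s ≤ s₀ → ENNReal.ofReal (c₁ * s ^ 2) ≤ μ (ball p s))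
    {x₁ x₂ : S} {a₁ a₂ s ρ : ℝ} (ha₁ : 0 ≤ a₁) (hs : 0 < s) (hss₀ : s ≤ s₀) (hs₁ : s ≤ 1)
    (hρ : ∀ y ∈ ball x₁ (s / (1 + a₁)), ρ ≤ dist x₂ y) (hρ₀ : 0 ≤ ρ) :
    c₁ * s ^ 2 * (1 + a₂ ^ 2 * ρ ^ 2) / 4 / (1 + a₁) ^ 2 ≤
      ∫ y, bubbleQuotient a₁ a₂ x₁ x₂ y ∂μ := by
  set r := s / (1 + a₁)
  have hr : 0 < r := by positivity
  have hrs₀ : r ≤ s₀ := (div_le_self hs.le (by linarith)).trans hss₀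
  have har : a₁ * r ≤ 1 := by
    rw [mul_div_left_comm]
    exact mul_le_one₀ hs₁ (by positivity) (div_le_one_of_le₀ (by linarith) (by positivity))
  have hpoint : ∀ y ∈ ball x₁ r, (1 + a₂ ^ 2 * ρ ^ 2) / 4 ≤ bubbleQuotient a₁ a₂ x₁ x₂ y := by
    intro y hy
    have hnum : 1 + a₂ ^ 2 * ρ ^ 2 ≤ bubbleFactor a₂ x₂ y := by
      unfold bubbleFactor; gcongr; exact hρ y hy
    have hden : bubbleFactor a₁ x₁ y ≤ 2 := by
      have h := bubbleFactor_le_of_dist_le (a := a₁) (mem_ball'.1 hy).le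
      nlinarith [pow_le_one₀ (by positivity) har (n := 2), mul_pow a₁ r 2]
    exact div_le_div₀ (bubbleFactor_pos a₂ x₂ y).le hnum (pow_pos (bubbleFactor_pos a₁ x₁ y) 2)
      (by nlinarith [one_le_bubbleFactor a₁ x₁ y])
  calc c₁ * s ^ 2 * (1 + a₂ ^ 2 * ρ ^ 2) / 4 / (1 + a₁) ^ 2
      = (1 + a₂ ^ 2 * ρ ^ 2) / 4 * (c₁ * r ^ 2) := by rw [div_pow]; ring
    _ ≤ (1 + a₂ ^ 2 * ρ ^ 2) / 4 * μ.real (ball x₁ r) := by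
        gcongr
        exact (ENNReal.ofReal_le_iff_le_toReal (measure_ne_top μ _)).1 (hvol x₁ r hr hrs₀)
    _ ≤ _ := mul_measureReal_le_integral_bubbleQuotient measurableSet_ball hpoint

lemma integral_bubbleQuotient_ge_of_le {x₁ x₂ : S} {a₁ a₂ A c₁ s₀ s : ℝ} (hc₁ : 0 ≤ c₁)
    (hvol : ∀ (p : S) (s : ℝ), 0 < s → s ≤ s₀ → ENNReal.ofReal (c₁ * s ^ 2) ≤ μ (ball p s))
    (hs : 0 < s) (hss₀ : s ≤ s₀) (hs₁ : s ≤ 1) (ha₁ : 0 ≤ a₁) (ha₂ : 0 ≤ a₂) (ha₂A : a₂ ≤ A) :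
    c₁ * s ^ 2 / (4 * (1 + A) ^ 2) * ((1 + a₂) ^ 2 / (1 + a₁) ^ 2) ≤
      ∫ y, bubbleQuotient a₁ a₂ x₁ x₂ y ∂μ := by
  have h := integral_bubbleQuotient_ge_of_ball (a₂ := a₂) (x₁ := x₁) (x₂ := x₂) hvol ha₁ hs hss₀ hs₁
    (fun _ _ => dist_nonneg) le_rfl
  refine le_trans ?_ h
  have hq : (1 + a₂) ^ 2 / (1 + A) ^ 2 ≤ 1 :=
    div_le_one_of_le₀ (pow_le_pow_left₀ (by linarith) (by linarith) 2) (sq_nonneg _)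
  calc c₁ * s ^ 2 / (4 * (1 + A) ^ 2) * ((1 + a₂) ^ 2 / (1 + a₁) ^ 2)
      = c₁ * s ^ 2 / 4 / (1 + a₁) ^ 2 * ((1 + a₂) ^ 2 / (1 + A) ^ 2) := by
        rw [← div_div]; ring
    _ ≤ c₁ * s ^ 2 / 4 / (1 + a₁) ^ 2 * 1 := by gcongr
    _ = _ := by ring

lemma integral_bubbleQuotient_ge_of_separated {x₁ x₂ : S} {a₁ a₂ c₁ s₀ s ρ : ℝ} (hc₁ : 0 ≤ c₁)
    (hvol : ∀ (p : S) (s : ℝ), 0 < s → s ≤ s₀ → ENNReal.ofReal (c₁ * s ^ 2) ≤ μ (ball p s))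
    (hs : 0 < s) (hss₀ : s ≤ s₀) (hs₁ : s ≤ 1) (ha₁ : 0 ≤ a₁) (ha₂ : 1 ≤ a₂) (hρ : 0 ≤ ρ)
    (hsep : ρ + s / (1 + a₁) ≤ dist x₁ x₂) :
    c₁ * s ^ 2 * ρ ^ 2 / 16 * ((1 + a₂) ^ 2 / (1 + a₁) ^ 2) ≤
      ∫ y, bubbleQuotient a₁ a₂ x₁ x₂ y ∂μ := by
  have hfar : ∀ y ∈ ball x₁ (s / (1 + a₁)), ρ ≤ dist x₂ y := fun y hy => by
    linarith [dist_triangle x₁ y x₂, dist_comm x₂ y, mem_ball'.1 hy]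
  refine le_trans ?_ (integral_bubbleQuotient_ge_of_ball hvol ha₁ hs hss₀ hs₁ hfar hρ)
  have h2 : (1 + a₂) ^ 2 * ρ ^ 2 ≤ 4 * (1 + a₂ ^ 2 * ρ ^ 2) := by
    nlinarith [mul_le_mul_of_nonneg_right (show (1 + a₂) ^ 2 ≤ 4 * a₂ ^ 2 by nlinarith)
      (sq_nonneg ρ), sq_nonneg ρ]
  calc c₁ * s ^ 2 * ρ ^ 2 / 16 * ((1 + a₂) ^ 2 / (1 + a₁) ^ 2)
      = c₁ * s ^ 2 * ((1 + a₂) ^ 2 * ρ ^ 2) / 16 / (1 + a₁) ^ 2 := by ring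
    _ ≤ c₁ * s ^ 2 * (4 * (1 + a₂ ^ 2 * ρ ^ 2)) / 16 / (1 + a₁) ^ 2 := by gcongr
    _ = _ := by ring

end FiniteMeasure

section ProbabilityMeasure

variable {S : Type*} [MetricSpace S] [CompactSpace S] [MeasurableSpace S] [OpensMeasurableSpace S]
  {μ : Measure S} [IsProbabilityMeasure μ]

lemma integral_inv_bubbleFactor_sq_le {c₂ : ℝ} (hc₂ : 0 ≤ c₂)
    (hvol : ∀ (p : S) (s : ℝ), 0 < s → μ (ball p s) ≤ ENNReal.ofReal (c₂ * s ^ 2))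
    (p : S) {a : ℝ} (ha : 0 ≤ a) :
    ∫ y, (bubbleFactor a p y ^ 2)⁻¹ ∂μ ≤ 4 * (1 + 6 * c₂) / (1 + a) ^ 2 := by
  rcases le_or_gt a 1 with ha1 | ha1
  · have hle : ∀ y, (bubbleFactor a p y ^ 2)⁻¹ ≤ 1 := fun y =>
      inv_le_one_of_one_le₀ (one_le_pow₀ (one_le_bubbleFactor a p y))
    calc ∫ y, (bubbleFactor a p y ^ 2)⁻¹ ∂μ ≤ ∫ _, (1 : ℝ) ∂μ :=
          integral_mono (continuous_inv_bubbleFactor_sq a p).integrable_of_compactSpace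
            (integrable_const 1) hle
      _ = 1 := by simp
      _ ≤ 4 * (1 + 6 * c₂) / (1 + a) ^ 2 := by
          rw [le_div_iff₀ (by positivity)]; nlinarith
  · rw [integral_eq_lintegral_of_nonneg_ae (ae_of_all _ fun y => by positivity)
      (continuous_inv_bubbleFactor_sq a p).aestronglyMeasurable]
    calc _ ≤ 16 * c₂ / (3 * a ^ 2) := ENNReal.toReal_le_of_le_ofReal (by positivity)
          (lintegral_inv_bubbleFactor_sq_le hc₂ hvol p (by linarith))
      _ ≤ 4 * (1 + 6 * c₂) / (1 + a) ^ 2 := by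
          rw [div_le_div_iff₀ (by positivity) (by positivity)]
          nlinarith [mul_le_mul_of_nonneg_left (show (1 + a) ^ 2 ≤ 4 * a ^ 2 by nlinarith) hc₂]

lemma integral_bubbleQuotient_le {c₂ : ℝ} (hc₂ : 0 ≤ c₂)
    (hvol : ∀ (p : S) (s : ℝ), 0 < s → μ (ball p s) ≤ ENNReal.ofReal (c₂ * s ^ 2))
    (x₁ x₂ : S) {a₁ a₂ : ℝ} (ha₁ : 0 ≤ a₁) (ha₂ : 0 ≤ a₂) :
    ∫ y, bubbleQuotient a₁ a₂ x₁ x₂ y ∂μ ≤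
      (1 + diam (Set.univ : Set S) ^ 2) * (4 * (1 + 6 * c₂)) * ((1 + a₂) ^ 2 / (1 + a₁) ^ 2) := by
  set D := diam (Set.univ : Set S)
  have hnum : ∀ y, bubbleFactor a₂ x₂ y ≤ (1 + D ^ 2) * (1 + a₂) ^ 2 := fun y =>
    (bubbleFactor_le_diam a₂ x₂ y).trans (by nlinarith [sq_nonneg (D * a₂), sq_nonneg D])
  calc ∫ y, bubbleQuotient a₁ a₂ x₁ x₂ y ∂μ
      ≤ ∫ y, (1 + D ^ 2) * (1 + a₂) ^ 2 * (bubbleFactor a₁ x₁ y ^ 2)⁻¹ ∂μ :=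
        integral_mono (integrable_bubbleQuotient a₁ a₂ x₁ x₂)
          ((continuous_inv_bubbleFactor_sq a₁ x₁).integrable_of_compactSpace.const_mul _)
          fun y => by
            rw [bubbleQuotient, div_eq_mul_inv]
            exact mul_le_mul_of_nonneg_right (hnum y) (by positivity)
    _ = (1 + D ^ 2) * (1 + a₂) ^ 2 * ∫ y, (bubbleFactor a₁ x₁ y ^ 2)⁻¹ ∂μ :=
        integral_const_mul _ _
    _ ≤ (1 + D ^ 2) * (1 + a₂) ^ 2 * (4 * (1 + 6 * c₂) / (1 + a₁) ^ 2) := by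
        gcongr; exact integral_inv_bubbleFactor_sq_le hc₂ hvol x₁ ha₁
    _ = _ := by ring

lemma integral_bubbleQuotient_ge_of_compl {c₂ : ℝ} (hc₂ : 0 ≤ c₂)
    (hvol : ∀ (p : S) (s : ℝ), 0 < s → μ (ball p s) ≤ ENNReal.ofReal (c₂ * s ^ 2))
    (x₁ x₂ : S) {a₁ a₂ r : ℝ} (hr : 0 < r) :
    a₂ ^ 2 * r ^ 2 / (1 + a₁ ^ 2 * diam (Set.univ : Set S) ^ 2) ^ 2 * (1 - c₂ * r ^ 2) ≤
      ∫ y, bubbleQuotient a₁ a₂ x₁ x₂ y ∂μ := by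
  have hpoint : ∀ y ∈ (ball x₂ r)ᶜ, a₂ ^ 2 * r ^ 2 / (1 + a₁ ^ 2 * diam (Set.univ : Set S) ^ 2) ^ 2
      ≤ bubbleQuotient a₁ a₂ x₁ x₂ y := by
    intro y hy
    have hnum : a₂ ^ 2 * r ^ 2 ≤ bubbleFactor a₂ x₂ y := by
      have : r ≤ dist x₂ y := by simpa [mem_ball, dist_comm] using hy
      unfold bubbleFactor
      nlinarith [mul_le_mul_of_nonneg_left (pow_le_pow_left₀ hr.le this 2) (sq_nonneg a₂)]
    exact div_le_div₀ (bubbleFactor_pos a₂ x₂ y).le hnum (pow_pos (bubbleFactor_pos a₁ x₁ y) 2)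
      (pow_le_pow_left₀ (bubbleFactor_pos a₁ x₁ y).le (bubbleFactor_le_diam a₁ x₁ y) 2)
  have hcompl : 1 - c₂ * r ^ 2 ≤ μ.real (ball x₂ r)ᶜ := by
    rw [probReal_compl_eq_one_sub measurableSet_ball]
    have hball : μ.real (ball x₂ r) ≤ c₂ * r ^ 2 :=
      ENNReal.toReal_le_of_le_ofReal (by positivity) (hvol x₂ r hr)
    linarith
  calc _ ≤ a₂ ^ 2 * r ^ 2 / (1 + a₁ ^ 2 * diam (Set.univ : Set S) ^ 2) ^ 2 *
        μ.real (ball x₂ r)ᶜ := by gcongr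
    _ ≤ _ := mul_measureReal_le_integral_bubbleQuotient measurableSet_ball.compl hpoint

lemma integral_bubbleQuotient_ge_of_one_le {x₁ x₂ : S} {a₁ a₂ A c₂ : ℝ} (hc₂ : 0 < c₂)
    (hvol : ∀ (p : S) (s : ℝ), 0 < s → μ (ball p s) ≤ ENNReal.ofReal (c₂ * s ^ 2))
    (ha₁ : 0 ≤ a₁) (ha₁A : a₁ ≤ A) (ha₂ : 1 ≤ a₂) :
    1 / (16 * c₂ * (1 + A ^ 2 * diam (Set.univ : Set S) ^ 2) ^ 2) *
        ((1 + a₂) ^ 2 / (1 + a₁) ^ 2) ≤ ∫ y, bubbleQuotient a₁ a₂ x₁ x₂ y ∂μ := by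
  set D := diam (Set.univ : Set S)
  set r := √(1 / (2 * c₂))
  have hr2 : r ^ 2 = 1 / (2 * c₂) := sq_sqrt (by positivity)
  refine le_trans ?_ (integral_bubbleQuotient_ge_of_compl hc₂.le hvol x₁ x₂
    (a₁ := a₁) (a₂ := a₂) (sqrt_pos.2 (by positivity : 0 < 1 / (2 * c₂))))
  rw [hr2]
  have hden : (1 + a₁ ^ 2 * D ^ 2) ^ 2 ≤ (1 + A ^ 2 * D ^ 2) ^ 2 := by gcongr
  have hq : (1 + a₂) ^ 2 / (1 + a₁) ^ 2 ≤ 4 * a₂ ^ 2 :=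
    div_le_of_le_mul₀ (by positivity) (by positivity) (by nlinarith)
  calc 1 / (16 * c₂ * (1 + A ^ 2 * D ^ 2) ^ 2) * ((1 + a₂) ^ 2 / (1 + a₁) ^ 2)
      ≤ 1 / (16 * c₂ * (1 + a₁ ^ 2 * D ^ 2) ^ 2) * (4 * a₂ ^ 2) := by gcongr
    _ = _ := by field_simp; ring

lemma exists_integral_bubbleQuotient_ge {c₁ c₂ s₀ δ : ℝ} (hc₁ : 0 < c₁) (hc₂ : 0 < c₂)
    (hs₀ : 0 < s₀)
    (hvol_lower : ∀ (p : S) (s : ℝ), 0 < s → s ≤ s₀ → ENNReal.ofReal (c₁ * s ^ 2) ≤ μ (ball p s))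
    (hvol_upper : ∀ (p : S) (s : ℝ), 0 < s → μ (ball p s) ≤ ENNReal.ofReal (c₂ * s ^ 2))
    (hδ : 0 < δ) :
    ∃ c > 0, ∀ (x₁ x₂ : S) (t₁ t₂ : ℝ), 0 < t₁ → t₁ ≤ δ → 0 < t₂ → t₂ ≤ δ →
      (δ ^ 4 ≤ |t₁ - t₂| ^ 2 + dist x₁ x₂ ^ 2 ∨ max t₁ t₂ = δ) →
      c * ((1 + bubbleScale δ t₂) ^ 2 / (1 + bubbleScale δ t₁) ^ 2) ≤
        ∫ y, bubbleQuotient (bubbleScale δ t₁) (bubbleScale δ t₂) x₁ x₂ y ∂μ := by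
  set τ := min δ 1 ^ 2 / 2 with hτdef
  set s := min s₀ (1 / 2)
  have hδ₁ : 0 < min δ 1 := lt_min hδ one_pos
  have hτ : 0 < τ := by positivity
  have hτδ : 2 * τ ≤ δ ^ 2 := by
    have := pow_le_pow_left₀ hδ₁.le (min_le_left δ 1) 2; linarith
  have hτδ' : τ ≤ δ / 2 := by
    have := mul_le_mul (min_le_left δ 1) (min_le_right δ 1) hδ₁.le hδ.le; nlinarith
  have hτ₁ : τ ≤ 1 / 2 := by
    have := pow_le_one₀ hδ₁.le (min_le_right δ 1) (n := 2); linarith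
  have hs : 0 < s := lt_min hs₀ (by norm_num)
  have hss₀ : s ≤ s₀ := min_le_left _ _
  have hs₁ : s ≤ 1 / 2 := min_le_right _ _
  refine ⟨min (c₁ * s ^ 2 / (4 * (1 + 1 / τ) ^ 2))
    (min (1 / (16 * c₂ * (1 + (1 / τ) ^ 2 * diam (Set.univ : Set S) ^ 2) ^ 2))
      (c₁ * s ^ 2 * τ ^ 2 / 16)), by positivity, ?_⟩
  intro x₁ x₂ t₁ t₂ ht₁ ht₁δ ht₂ ht₂δ hsep
  have ha₁ := bubbleScale_nonneg (δ := δ) ht₁ ht₁δ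
  have ha₂ := bubbleScale_nonneg (δ := δ) ht₂ ht₂δ
  have hq : 0 ≤ (1 + bubbleScale δ t₂) ^ 2 / (1 + bubbleScale δ t₁) ^ 2 := by positivity
  rcases le_or_gt τ t₂ with h₂ | h₂
  · exact (mul_le_mul_of_nonneg_right (min_le_left _ _) hq).trans
      (integral_bubbleQuotient_ge_of_le hc₁.le hvol_lower hs hss₀ (by linarith) ha₁ ha₂
        (bubbleScale_le_of_le hδ hτ hτδ' h₂ ht₂δ))
  have ha₂₁ : 1 ≤ bubbleScale δ t₂ := by
    rw [bubbleScale_of_le (by linarith), le_div_iff₀ ht₂]; linarith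
  rcases le_or_gt τ t₁ with h₁ | h₁
  · exact (mul_le_mul_of_nonneg_right ((min_le_right _ _).trans (min_le_left _ _)) hq).trans
      (integral_bubbleQuotient_ge_of_one_le hc₂ hvol_upper ha₁
        (bubbleScale_le_of_le hδ hτ hτδ' h₁ ht₁δ) ha₂₁)
  have hsep' : δ ^ 4 ≤ |t₁ - t₂| ^ 2 + dist x₁ x₂ ^ 2 :=
    hsep.resolve_right (max_lt (by linarith) (by linarith)).ne
  have hdist := three_halves_mul_le_of_le_sq_add_sq hτ hτδ
    (abs_sub_lt_iff.2 ⟨by linarith, by linarith⟩) dist_nonneg hsep'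
  have hr : s / (1 + bubbleScale δ t₁) ≤ τ / 2 := by
    rw [bubbleScale_of_le (by linarith)]
    calc s / (1 + 1 / t₁) = s * t₁ / (t₁ + 1) := by field_simp
      _ ≤ s * t₁ := div_le_self (by positivity) (by linarith)
      _ ≤ τ / 2 := by nlinarith
  exact (mul_le_mul_of_nonneg_right ((min_le_right _ _).trans (min_le_right _ _)) hq).trans
    (integral_bubbleQuotient_ge_of_separated hc₁.le hvol_lower hs hss₀ (by linarith) ha₁ ha₂₁
      hτ.le (by linarith))

end ProbabilityMeasure

theorem stmt10_general {S : Type*} [MetricSpace S] [CompactSpace S] [MeasurableSpace S]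
    [BorelSpace S] (μ : Measure S) [IsProbabilityMeasure μ]
    (c₁ c₂ s₀ : ℝ) (hc₁ : 0 < c₁) (hc₂ : 0 < c₂) (hs₀ : 0 < s₀)
    (hvol_lower : ∀ (p : S) (s : ℝ), 0 < s → s ≤ s₀ →
      ENNReal.ofReal (c₁ * s ^ 2) ≤ μ (ball p s))
    (hvol_upper : ∀ (p : S) (s : ℝ), 0 < s → μ (ball p s) ≤ ENNReal.ofReal (c₂ * s ^ 2))
    (δ : ℝ) (hδ : 0 < δ) :
    ∃ ν₀ : ℝ, 0 < ν₀ ∧ ν₀ < δ ∧ ∃ C : ℝ, 0 < C ∧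
      ∀ (x₁ x₂ : S) (t₁ t₂ : ℝ), 0 < t₁ → t₁ ≤ δ → 0 < t₂ → t₂ ≤ δ →
        ν₀ ^ 2 ≤ min t₁ t₂ → min t₁ t₂ ≤ ν₀ →
        (δ ^ 4 ≤ |t₁ - t₂| ^ 2 + dist x₁ x₂ ^ 2 ∨ max t₁ t₂ = δ) →
        (1 / C) * (t₁ ^ 2 / t₂ ^ 2) ≤
            (∫ y, exp (log ((1 + (if t₂ ≤ δ / 2 then 1 / t₂ else -(4 / δ ^ 2) * (t₂ - δ)) ^ 2
                    * dist x₂ y ^ 2) /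
                  (1 + (if t₁ ≤ δ / 2 then 1 / t₁ else -(4 / δ ^ 2) * (t₁ - δ)) ^ 2
                    * dist x₁ y ^ 2) ^ 2)) ∂μ) ∧
          (∫ y, exp (log ((1 + (if t₂ ≤ δ / 2 then 1 / t₂ else -(4 / δ ^ 2) * (t₂ - δ)) ^ 2
                  * dist x₂ y ^ 2) /
                (1 + (if t₁ ≤ δ / 2 then 1 / t₁ else -(4 / δ ^ 2) * (t₁ - δ)) ^ 2
                  * dist x₁ y ^ 2) ^ 2)) ∂μ) ≤ C * (t₁ ^ 2 / t₂ ^ 2) := by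
  obtain ⟨c, hc, hlower⟩ :=
    exists_integral_bubbleQuotient_ge (μ := μ) hc₁ hc₂ hs₀ hvol_lower hvol_upper hδ
  set k := ((δ + 1) / min 1 (δ / 2)) ^ 2
  set Cup := (1 + diam (Set.univ : Set S) ^ 2) * (4 * (1 + 6 * c₂))
  have hk : 0 < k := pow_pos (div_pos (by linarith) (lt_min one_pos (half_pos hδ))) 2
  refine ⟨δ / 2, half_pos hδ, half_lt_self hδ, max (Cup * k) (k / c),
    lt_max_of_lt_right (by positivity), ?_⟩
  intro x₁ x₂ t₁ t₂ ht₁ ht₁δ ht₂ ht₂δ _ _ hsep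
  set f := bubbleQuotient (bubbleScale δ t₁) (bubbleScale δ t₂) x₁ x₂
  have hexp_log : ∀ y, exp (log (f y)) = f y := fun y => exp_log (bubbleQuotient_pos _ _ _ _ y)
  change _ ≤ ∫ y, exp (log (f y)) ∂μ ∧ ∫ y, exp (log (f y)) ∂μ ≤ _
  simp only [hexp_log]
  exact one_div_max_mul_le_and_le_max_mul hc (by positivity) hk (by positivity)
    (hlower x₁ x₂ t₁ t₂ ht₁ ht₁δ ht₂ ht₂δ hsep)
    (integral_bubbleQuotient_le hc₂.le hvol_upper x₁ x₂ (bubbleScale_nonneg ht₁ ht₁δ)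
      (bubbleScale_nonneg ht₂ ht₂δ))
    (sq_div_sq_le_one_add_bubbleScale hδ ht₁ ht₁δ ht₂ ht₂δ)
    (one_add_bubbleScale_sq_div_sq_le hδ ht₁ ht₁δ ht₂ ht₂δ)

/-- Test-function integral estimates. On a compact metric probability space which is
Ahlfors 2-regular at small scales (as a compact surface of unit area), fix `δ > 0` small.
For parameters `((x₁,t₁),(x₂,t₂))` in the set `𝒳_ν` (i.e. `t_i ∈ (0,δ]`,
`min tᵢ ∈ [ν², ν]` with `ν ≪ δ`, and either `|t₁−t₂|² + d(x₁,x₂)² ≥ δ⁴` or `max tᵢ = δ`),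
set `t̃ᵢ = 1/tᵢ` for `tᵢ ≤ δ/2` and `t̃ᵢ = −(4/δ²)(tᵢ−δ)` otherwise, and
`φ₁(y) = log[(1 + t̃₂² d(x₂,y)²)/(1 + t̃₁² d(x₁,y)²)²]`. Then there exists
`C = C(δ, Σ) > 0` with `(1/C) t₁²/t₂² ≤ ∫_Σ e^{φ₁} ≤ C t₁²/t₂²`. -/
theorem stmt10 {S : Type*} [MetricSpace S] [CompactSpace S] [MeasurableSpace S]
    [BorelSpace S] (μ : Measure S) [IsProbabilityMeasure μ]
    (c₁ c₂ s₀ : ℝ) (hc₁ : 0 < c₁) (hc₂ : 0 < c₂) (hs₀ : 0 < s₀)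
    (hvol_lower : ∀ (p : S) (s : ℝ), 0 < s → s ≤ s₀ →
      ENNReal.ofReal (c₁ * s ^ 2) ≤ μ (ball p s))
    (hvol_upper : ∀ (p : S) (s : ℝ), 0 < s → μ (ball p s) ≤ ENNReal.ofReal (c₂ * s ^ 2))
    (δ : ℝ) (hδ : 0 < δ) (hδs : δ ≤ s₀) :
    ∃ ν₀ : ℝ, 0 < ν₀ ∧ ν₀ < δ ∧ ∃ C : ℝ, 0 < C ∧
      ∀ (x₁ x₂ : S) (t₁ t₂ : ℝ), 0 < t₁ → t₁ ≤ δ → 0 < t₂ → t₂ ≤ δ →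
        ν₀ ^ 2 ≤ min t₁ t₂ → min t₁ t₂ ≤ ν₀ →
        (δ ^ 4 ≤ |t₁ - t₂| ^ 2 + dist x₁ x₂ ^ 2 ∨ max t₁ t₂ = δ) →
        (1 / C) * (t₁ ^ 2 / t₂ ^ 2) ≤
            (∫ y, exp (log ((1 + (if t₂ ≤ δ / 2 then 1 / t₂ else -(4 / δ ^ 2) * (t₂ - δ)) ^ 2
                    * dist x₂ y ^ 2) /
                  (1 + (if t₁ ≤ δ / 2 then 1 / t₁ else -(4 / δ ^ 2) * (t₁ - δ)) ^ 2
                    * dist x₁ y ^ 2) ^ 2)) ∂μ) ∧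
          (∫ y, exp (log ((1 + (if t₂ ≤ δ / 2 then 1 / t₂ else -(4 / δ ^ 2) * (t₂ - δ)) ^ 2
                  * dist x₂ y ^ 2) /
                (1 + (if t₁ ≤ δ / 2 then 1 / t₁ else -(4 / δ ^ 2) * (t₁ - δ)) ^ 2
                  * dist x₁ y ^ 2) ^ 2)) ∂μ) ≤ C * (t₁ ^ 2 / t₂ ^ 2) :=
  stmt10_general μ c₁ c₂ s₀ hc₁ hc₂ hs₀ hvol_lower hvol_upper δ hδ
end

section
/- (Non-concentration of the test functions at scale tᵢ.) With φ₁ as above (φ₁(y) = log[(1+t̃₂² d(x₂,y)²)/(1+t̃₁² d(x₁,y)²)²]), there exists C = C(δ,Σ) > 0 such that for every r > 0 and every x ∈ Σ: ∫_{B_x(r t₁)} e^{φ₁} dV ≤ C r² (t₁²/t₂²). -/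
/-!
The denominator `(1 + t̃₁² d(x₁,y)²)²` is at least `1`, and `|t̃₂| ≤ 2 / t₂` gives
`1 + t̃₂² d(x₂,y)² ≤ (δ² + 4 diam(S)²) / t₂²` on all of `S`. So `e^{φ₁}` is bounded by a constant
times `t₂⁻²`, and the upper Ahlfors bound `μ(B_x(r t₁)) ≤ c₂ (r t₁)²` finishes the estimate.
-/

open MeasureTheory Metric Real

/-- The paper's `t̃`: equal to `1 / t` for `t ≤ δ / 2`, then decreasing linearly to `0` at `t = δ`. -/
noncomputable def cutoffInv (δ t : ℝ) : ℝ :=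
  if t ≤ δ / 2 then 1 / t else -(4 / δ ^ 2) * (t - δ)

theorem abs_cutoffInv_le {δ t : ℝ} (ht : 0 < t) (htδ : t ≤ δ) : |cutoffInv δ t| ≤ 2 / t := by
  have hδ : 0 < δ := ht.trans_le htδ
  unfold cutoffInv
  split_ifs with h
  · rw [abs_of_pos (one_div_pos.mpr ht)]
    gcongr
    norm_num
  · calc |-(4 / δ ^ 2) * (t - δ)| = 4 * (δ - t) / δ ^ 2 := by
          rw [abs_mul, abs_neg, abs_of_pos (by positivity), abs_of_nonpos (by linarith)]
          ring
      _ ≤ 4 * (δ / 2) / δ ^ 2 := by gcongr; linarith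
      _ = 2 / δ := by field_simp; ring
      _ ≤ 2 / t := by gcongr

theorem one_add_sq_mul_sq_le {s d D t δ : ℝ} (hs : |s| ≤ 2 / t) (hd₀ : 0 ≤ d) (hdD : d ≤ D)
    (ht : 0 < t) (htδ : t ≤ δ) : 1 + s ^ 2 * d ^ 2 ≤ (δ ^ 2 + 4 * D ^ 2) / t ^ 2 := by
  have hs2 : s ^ 2 ≤ 4 / t ^ 2 := by
    calc s ^ 2 = |s| ^ 2 := (sq_abs s).symm
      _ ≤ (2 / t) ^ 2 := by gcongr
      _ = 4 / t ^ 2 := by ring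
  have hδt : 1 ≤ δ ^ 2 / t ^ 2 := by
    rw [one_le_div (by positivity)]
    gcongr
  calc 1 + s ^ 2 * d ^ 2 ≤ δ ^ 2 / t ^ 2 + 4 / t ^ 2 * D ^ 2 := by gcongr
    _ = (δ ^ 2 + 4 * D ^ 2) / t ^ 2 := by ring

theorem exp_log_div_sq_le {a b : ℝ} (ha : 0 < a) (hb : 1 ≤ b) : exp (log (a / b ^ 2)) ≤ a := by
  have hb2 : 1 ≤ b ^ 2 := one_le_pow₀ hb
  rw [exp_log (div_pos ha (by linarith))]
  exact div_le_self ha.le hb2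

theorem exp_log_testRatio_le {S : Type*} [MetricSpace S] [CompactSpace S] {δ t₁ t₂ : ℝ}
    (ht₂ : 0 < t₂) (ht₂δ : t₂ ≤ δ) (x₁ x₂ y : S) :
    exp (log ((1 + cutoffInv δ t₂ ^ 2 * dist x₂ y ^ 2) /
        (1 + cutoffInv δ t₁ ^ 2 * dist x₁ y ^ 2) ^ 2))
      ≤ (δ ^ 2 + 4 * diam (Set.univ : Set S) ^ 2) / t₂ ^ 2 := by
  have hnum : 1 + cutoffInv δ t₂ ^ 2 * dist x₂ y ^ 2
      ≤ (δ ^ 2 + 4 * diam (Set.univ : Set S) ^ 2) / t₂ ^ 2 :=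
    one_add_sq_mul_sq_le (abs_cutoffInv_le ht₂ ht₂δ) dist_nonneg
      (dist_le_diam_of_mem isCompact_univ.isBounded trivial trivial) ht₂ ht₂δ
  refine (exp_log_div_sq_le (by positivity) ?_).trans hnum
  exact le_add_of_nonneg_right (by positivity)

theorem norm_setIntegral_le_of_norm_le_const_of_measure_le {X E : Type*} [MeasurableSpace X]
    [NormedAddCommGroup E] [NormedSpace ℝ E] {μ : Measure X} {f : X → E} {s : Set X}
    {M V : ℝ} (hM : 0 ≤ M) (hV : 0 ≤ V) (hs : μ s ≤ ENNReal.ofReal V)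
    (hf : ∀ x ∈ s, ‖f x‖ ≤ M) : ‖∫ x in s, f x ∂μ‖ ≤ M * V :=
  calc ‖∫ x in s, f x ∂μ‖ ≤ M * μ.real s :=
        norm_setIntegral_le_of_norm_le_const (hs.trans_lt ENNReal.ofReal_lt_top) hf
    _ ≤ M * V := by gcongr; exact ENNReal.toReal_le_of_le_ofReal hV hs

theorem stmt11_general {S : Type*} [MetricSpace S] [CompactSpace S] [MeasurableSpace S]
    (μ : Measure S)
    (c₂ : ℝ) (hc₂ : 0 < c₂)
    (hvol_upper : ∀ (p : S) (s : ℝ), 0 < s → μ (ball p s) ≤ ENNReal.ofReal (c₂ * s ^ 2))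
    (δ : ℝ) (hδ : 0 < δ) :
    ∃ ν₀ : ℝ, 0 < ν₀ ∧ ν₀ < δ ∧ ∃ C : ℝ, 0 < C ∧
      ∀ (x₁ x₂ : S) (t₁ t₂ : ℝ), 0 < t₁ → t₁ ≤ δ → 0 < t₂ → t₂ ≤ δ →
        ν₀ ^ 2 ≤ min t₁ t₂ → min t₁ t₂ ≤ ν₀ →
        (δ ^ 4 ≤ |t₁ - t₂| ^ 2 + dist x₁ x₂ ^ 2 ∨ max t₁ t₂ = δ) →
        ∀ (r : ℝ), 0 < r → ∀ x : S,
          (∫ y in ball x (r * t₁),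
              exp (log ((1 + (if t₂ ≤ δ / 2 then 1 / t₂ else -(4 / δ ^ 2) * (t₂ - δ)) ^ 2
                      * dist x₂ y ^ 2) /
                    (1 + (if t₁ ≤ δ / 2 then 1 / t₁ else -(4 / δ ^ 2) * (t₁ - δ)) ^ 2
                      * dist x₁ y ^ 2) ^ 2)) ∂μ) ≤ C * r ^ 2 * (t₁ ^ 2 / t₂ ^ 2) := by
  set K := δ ^ 2 + 4 * diam (Set.univ : Set S) ^ 2
  refine ⟨δ / 2, by linarith, by linarith, c₂ * K, by positivity, ?_⟩
  intro x₁ x₂ t₁ t₂ ht₁ _ ht₂ ht₂δ _ _ _ r hr x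
  calc _ ≤ ‖∫ y in ball x (r * t₁), exp (log ((1 + cutoffInv δ t₂ ^ 2 * dist x₂ y ^ 2) /
              (1 + cutoffInv δ t₁ ^ 2 * dist x₁ y ^ 2) ^ 2)) ∂μ‖ := le_norm_self _
    _ ≤ K / t₂ ^ 2 * (c₂ * (r * t₁) ^ 2) := by
        refine norm_setIntegral_le_of_norm_le_const_of_measure_le (by positivity) (by positivity)
          (hvol_upper x _ (by positivity)) fun y _ => ?_
        rw [norm_of_nonneg (exp_pos _).le]
        exact exp_log_testRatio_le ht₂ ht₂δ x₁ x₂ y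
    _ = c₂ * K * r ^ 2 * (t₁ ^ 2 / t₂ ^ 2) := by field_simp

/-- Non-concentration of the test functions at scale `t₁`. In the setup of the test-function
estimates (compact Ahlfors 2-regular metric probability space, parameters in `𝒳_ν`, with
`φ₁(y) = log[(1 + t̃₂² d(x₂,y)²)/(1 + t̃₁² d(x₁,y)²)²]`), there exists `C = C(δ,Σ) > 0` such
that for every `r > 0` and every `x`: `∫_{B_x(r t₁)} e^{φ₁} ≤ C r² t₁²/t₂²`. -/
theorem stmt11 {S : Type*} [MetricSpace S] [CompactSpace S] [MeasurableSpace S]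
    [BorelSpace S] (μ : Measure S) [IsProbabilityMeasure μ]
    (c₁ c₂ s₀ : ℝ) (hc₁ : 0 < c₁) (hc₂ : 0 < c₂) (hs₀ : 0 < s₀)
    (hvol_lower : ∀ (p : S) (s : ℝ), 0 < s → s ≤ s₀ →
      ENNReal.ofReal (c₁ * s ^ 2) ≤ μ (ball p s))
    (hvol_upper : ∀ (p : S) (s : ℝ), 0 < s → μ (ball p s) ≤ ENNReal.ofReal (c₂ * s ^ 2))
    (δ : ℝ) (hδ : 0 < δ) (hδs : δ ≤ s₀) :
    ∃ ν₀ : ℝ, 0 < ν₀ ∧ ν₀ < δ ∧ ∃ C : ℝ, 0 < C ∧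
      ∀ (x₁ x₂ : S) (t₁ t₂ : ℝ), 0 < t₁ → t₁ ≤ δ → 0 < t₂ → t₂ ≤ δ →
        ν₀ ^ 2 ≤ min t₁ t₂ → min t₁ t₂ ≤ ν₀ →
        (δ ^ 4 ≤ |t₁ - t₂| ^ 2 + dist x₁ x₂ ^ 2 ∨ max t₁ t₂ = δ) →
        ∀ (r : ℝ), 0 < r → ∀ x : S,
          (∫ y in ball x (r * t₁),
              exp (log ((1 + (if t₂ ≤ δ / 2 then 1 / t₂ else -(4 / δ ^ 2) * (t₂ - δ)) ^ 2
                      * dist x₂ y ^ 2) /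
                    (1 + (if t₁ ≤ δ / 2 then 1 / t₁ else -(4 / δ ^ 2) * (t₁ - δ)) ^ 2
                      * dist x₁ y ^ 2) ^ 2)) ∂μ) ≤ C * r ^ 2 * (t₁ ^ 2 / t₂ ^ 2) :=
  stmt11_general μ c₂ hc₂ hvol_upper δ hδ
end
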